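/- arXiv:1304.5466 — 5 statements merged into one kernel-verified Lean document; each statement's English description precedes it below -/
import Mathlib

section
/- For integers i, k, ℓ with 0 ≤ i ≤ k ≤ n and 0 ≤ ℓ ≤ n, the matrix identity W_{i,k} W̄_{k,ℓ} = q^{ℓ(k−i)} [n−i−ℓ choose k−i]_q · W̄_{i,ℓ} holds. -/
open Matrix

/-- The Gaussian binomial coefficient `[a choose b]_q`, as a real number:
`∏_{i=0}^{b-1} (q^(a-i)-1)/(q^(b-i)-1)` for `a, b ≥ 0`, and `0` if `a < 0` or `b < 0`. -/
noncomputable def gbinom (q : ℝ) (a b : ℤ) : ℝ :=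
  if 0 ≤ a ∧ 0 ≤ b then
    ∏ i ∈ Finset.range b.toNat, (q ^ (a - i) - 1) / (q ^ (b - i) - 1)
  else 0

/-- The matrix `W_{k,ℓ}` on `L(V) × L(V)`: `(W_{k,ℓ})_{x,y} = 1` if `dim x = k`, `dim y = ℓ`
and `dim (x ⊓ y) = min k ℓ`, and `0` otherwise.  (Indices in `ℤ`, so that `W_{-1,0} = 0`.) -/
noncomputable def Wmat (K V : Type*) [Field K] [AddCommGroup V] [Module K V] (k l : ℤ) :
    Matrix (Submodule K V) (Submodule K V) ℝ :=
  Matrix.of fun x y =>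
    if (Module.finrank K x : ℤ) = k ∧ (Module.finrank K y : ℤ) = l ∧
        (Module.finrank K ↥(x ⊓ y) : ℤ) = min k l then 1 else 0

open Classical in
/-- The matrix `W̄_{k,ℓ}`: `(W̄_{k,ℓ})_{x,y} = 1` if `dim x = k`, `dim y = ℓ` and `x ⊓ y = ⊥`,
and `0` otherwise. -/
noncomputable def Wbarmat (K V : Type*) [Field K] [AddCommGroup V] [Module K V] (k l : ℤ) :
    Matrix (Submodule K V) (Submodule K V) ℝ :=
  Matrix.of fun x y =>
    if (Module.finrank K x : ℤ) = k ∧ (Module.finrank K y : ℤ) = l ∧ x ⊓ y = ⊥ then 1 else 0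

/-!
Entry `(x, y)` of `W_{i,k} W̄_{k,ℓ}` counts the `k`-dimensional `z ⊇ x` with `z ∩ y = 0`, and
vanishes unless `dim x = i`, `dim y = ℓ` and `x ∩ y = 0`. With `m = k - i`, count the `m`-tuples
`s` that are independent modulo `x ⊕ y` in two ways: directly there are
`q^{(i+ℓ)m} ∏_{j<m} (q^{n-i-ℓ} - q^j)` of them, and each generates such a `z = x + span s`; the
tuples generating a given `z` are the tuples in `z` independent modulo `z ∩ (x ⊕ y) = x`, and
there are `q^{im} ∏_{j<m} (q^m - q^j)` of those. The quotient is `q^{ℓm} [n-i-ℓ choose m]_q`.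
-/

open Module Submodule

theorem Nat.card_eq_card_mul_of_card_fiber {α β : Type*} [Finite α] [Finite β] (f : α → β)
    {c : ℕ} (hc : ∀ b, Nat.card {a // f a = b} = c) : Nat.card α = Nat.card β * c := by
  have := Fintype.ofFinite β
  rw [← Nat.card_congr (Equiv.sigmaFiberEquiv f), Nat.card_sigma]
  simp [hc, Nat.card_eq_fintype_card]

theorem Nat.cast_prod_range_pow_sub_pow {R : Type*} [CommRing R] {q : ℕ} (hq : 1 ≤ q)
    (a m : ℕ) :
    ((∏ j ∈ Finset.range m, (q ^ a - q ^ j) : ℕ) : R) =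
      ∏ j ∈ Finset.range m, ((q : R) ^ a - (q : R) ^ j) := by
  by_cases hma : m ≤ a
  · push_cast
    refine Finset.prod_congr rfl fun j hj => ?_
    have hja : j ≤ a := (Finset.mem_range.1 hj).le.trans hma
    rw [Nat.cast_sub (Nat.pow_le_pow_right hq hja), Nat.cast_pow, Nat.cast_pow]
  · have ha : a ∈ Finset.range m := Finset.mem_range.2 (by omega)
    rw [Finset.prod_eq_zero ha (Nat.sub_self (q ^ a)),
      Finset.prod_eq_zero ha (sub_self ((q : R) ^ a)), Nat.cast_zero]

theorem gbinom_natCast {q : ℝ} (hq : q ≠ 0) (a b : ℕ) :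
    gbinom q a b =
      (∏ j ∈ Finset.range b, (q ^ a - q ^ j)) / ∏ j ∈ Finset.range b, (q ^ b - q ^ j) := by
  have factor (c j : ℕ) : q ^ c - q ^ j = q ^ j * (q ^ ((c : ℤ) - j) - 1) := by
    rw [mul_sub, mul_one, ← zpow_natCast q j, ← zpow_add₀ hq, add_sub_cancel, zpow_natCast,
      zpow_natCast]
  simp only [factor, Finset.prod_mul_distrib]
  rw [mul_div_mul_left _ _ (Finset.prod_ne_zero_iff.2 fun j _ => pow_ne_zero j hq),
    ← Finset.prod_div_distrib, gbinom, if_pos ⟨Int.natCast_nonneg a, Int.natCast_nonneg b⟩,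
    Int.toNat_natCast]

section LinearIndependentCount

variable {K M N : Type*} [Field K] [AddCommGroup M] [Module K M] [AddCommGroup N] [Module K N]

local notation "q" => Fintype.card K

theorem card_linearIndependent_fin [Fintype K] [Finite M] (m : ℕ) :
    Nat.card {t : Fin m → M // LinearIndependent K t} =
      ∏ j ∈ Finset.range m, (q ^ finrank K M - q ^ j) := by
  rcases le_or_gt m (finrank K M) with h | h
  · rw [card_linearIndependent h, ← Fin.prod_univ_eq_prod_range]
  · have : IsEmpty {t : Fin m → M // LinearIndependent K t} :=
      ⟨fun ⟨t, ht⟩ => by simpa using (ht.fintype_card_le_finrank.trans_lt h).ne⟩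
    rw [Nat.card_of_isEmpty,
      Finset.prod_eq_zero (Finset.mem_range.2 h) (Nat.sub_self (q ^ finrank K M))]

theorem card_linearIndependent_comp_of_surjective (m : ℕ) (f : M →ₗ[K] N)
    (hf : Function.Surjective f) :
    Nat.card {s : Fin m → M // LinearIndependent K (f ∘ s)} =
      Nat.card (LinearMap.ker f) ^ m * Nat.card {t : Fin m → N // LinearIndependent K t} := by
  obtain ⟨g, hg⟩ := f.exists_rightInverse_of_surjective (LinearMap.range_eq_top.2 hf)
  have hfg (v : N) : f (g v) = v := LinearMap.congr_fun hg v
  let e : {s : Fin m → M // LinearIndependent K (f ∘ s)} ≃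
      {t : Fin m → N // LinearIndependent K t} × (Fin m → LinearMap.ker f) :=
    { toFun s := (⟨f ∘ s.1, s.2⟩, fun j => ⟨s.1 j - g (f (s.1 j)), by simp [hfg]⟩)
      invFun p := ⟨fun j => g (p.1.1 j) + p.2 j, by
        convert p.1.2 using 1
        ext j
        simp [hfg]⟩
      left_inv s := by ext; simp
      right_inv p := by ext <;> simp [hfg] }
  rw [Nat.card_congr e, Nat.card_prod, Nat.card_fun, Nat.card_eq_fintype_card (α := Fin m),
    Fintype.card_fin, mul_comm]

theorem card_linearIndependent_comp [Fintype K] [Finite M] (m : ℕ) (f : M →ₗ[K] N) :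
    Nat.card {s : Fin m → M // LinearIndependent K (f ∘ s)} =
      q ^ (finrank K (LinearMap.ker f) * m) *
        ∏ j ∈ Finset.range m, (q ^ finrank K (LinearMap.range f) - q ^ j) := by
  have : Finite (LinearMap.range f) := Finite.of_surjective _ f.surjective_rangeRestrict
  have hli (s : Fin m → M) :
      LinearIndependent K (f ∘ s) ↔ LinearIndependent K (f.rangeRestrict ∘ s) :=
    (LinearMap.range f).subtype.linearIndependent_iff (v := f.rangeRestrict ∘ s)
      (Submodule.ker_subtype _)
  rw [Nat.card_congr (Equiv.subtypeEquivRight hli),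
    card_linearIndependent_comp_of_surjective m _ f.surjective_rangeRestrict,
    card_linearIndependent_fin, LinearMap.ker_rangeRestrict, natCard_eq_pow_finrank (K := K),
    Nat.card_eq_fintype_card (α := K), ← pow_mul]

end LinearIndependentCount

theorem sup_inf_eq_left_of_le_of_disjoint {α : Type*} [Lattice α] [OrderBot α]
    [IsModularLattice α] {x y z : α} (hxz : x ≤ z) (hzy : Disjoint z y) : (x ⊔ y) ⊓ z = x := by
  rw [sup_inf_assoc_of_le y hxz, disjoint_iff.1 hzy.symm, sup_bot_eq]

section Extensions

variable {K V : Type*} [Field K] [AddCommGroup V] [Module K V]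
  {m : ℕ} {p x y z : Submodule K V} {s : Fin m → V}

theorem disjoint_sup_span_of_linearIndependent_mkQ (hxy : Disjoint x y)
    (hs : LinearIndependent K ((x ⊔ y).mkQ ∘ s)) :
    Disjoint (x ⊔ span K (Set.range s)) y := by
  rw [sup_comm]
  exact hxy.disjoint_sup_left_of_disjoint_sup_right
    (by simpa using Submodule.range_ker_disjoint hs)

variable [FiniteDimensional K V]

theorem finrank_sup_of_disjoint (h : Disjoint x y) :
    finrank K ↥(x ⊔ y) = finrank K x + finrank K y := by
  rw [← finrank_sup_add_finrank_inf_eq, h.eq_bot, finrank_bot, add_zero]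

theorem finrank_sup_span_of_linearIndependent_mkQ (hxp : x ≤ p)
    (hs : LinearIndependent K (p.mkQ ∘ s)) :
    finrank K ↥(x ⊔ span K (Set.range s)) = finrank K x + m := by
  have hsp : Disjoint (span K (Set.range s)) p := by
    simpa using Submodule.range_ker_disjoint hs
  rw [finrank_sup_of_disjoint (hsp.symm.mono_left hxp), finrank_span_eq_card (hs.of_comp _),
    Fintype.card_fin]

theorem sup_span_eq_iff_forall_mem (hxp : x ≤ p) (hs : LinearIndependent K (p.mkQ ∘ s))
    (hxz : x ≤ z) (hz : finrank K z = finrank K x + m) :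
    x ⊔ span K (Set.range s) = z ↔ ∀ j, s j ∈ z := by
  refine ⟨fun h j => h ▸ mem_sup_right (subset_span (Set.mem_range_self j)), fun h => ?_⟩
  refine eq_of_le_of_finrank_eq (sup_le hxz (span_le.2 (Set.range_subset_iff.2 h))) ?_
  rw [finrank_sup_span_of_linearIndependent_mkQ hxp hs, hz]

variable [Fintype K]

local notation "q" => Fintype.card K

theorem card_fiber_sup_span (hxz : x ≤ z) (hzy : Disjoint z y)
    (hz : finrank K z = finrank K x + m) :
    Nat.card {s : {s : Fin m → V // LinearIndependent K ((x ⊔ y).mkQ ∘ s)} //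
        x ⊔ span K (Set.range s.1) = z} =
      q ^ (finrank K x * m) * ∏ j ∈ Finset.range m, (q ^ m - q ^ j) := by
  have := Module.finite_of_finite K (M := V)
  let π := (x ⊔ y).mkQ ∘ₗ z.subtype
  have hmem {s : Fin m → V} (hs : LinearIndependent K ((x ⊔ y).mkQ ∘ s)) :=
    sup_span_eq_iff_forall_mem le_sup_left hs hxz hz
  let e : {s : {s : Fin m → V // LinearIndependent K ((x ⊔ y).mkQ ∘ s)} //
        x ⊔ span K (Set.range s.1) = z} ≃ {t : Fin m → z // LinearIndependent K (π ∘ t)} :=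
    { toFun s := ⟨fun j => ⟨s.1.1 j, (hmem s.1.2).1 s.2 j⟩, s.1.2⟩
      invFun t := ⟨⟨fun j => t.1 j, t.2⟩, (hmem t.2).2 fun j => (t.1 j).2⟩
      left_inv _ := rfl
      right_inv _ := rfl }
  have hker : LinearMap.ker π = comap z.subtype x := by
    ext v
    rw [LinearMap.ker_comp, ker_mkQ, mem_comap, mem_comap]
    refine ⟨fun h => ?_, fun h => mem_sup_left h⟩
    rw [← sup_inf_eq_left_of_le_of_disjoint hxz hzy]
    exact ⟨h, v.2⟩
  have hker_finrank : finrank K (LinearMap.ker π) = finrank K x := by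
    rw [hker, (comapSubtypeEquivOfLe hxz).finrank_eq]
  have hrange_finrank : finrank K (LinearMap.range π) = m := by
    have := LinearMap.finrank_range_add_finrank_ker π
    omega
  rw [Nat.card_congr e, card_linearIndependent_comp, hker_finrank, hrange_finrank]

theorem card_extensions_disjoint_mul (hxy : Disjoint x y) (m : ℕ) :
    Nat.card {z : Submodule K V // x ≤ z ∧ finrank K z = finrank K x + m ∧ Disjoint z y} *
        (q ^ (finrank K x * m) * ∏ j ∈ Finset.range m, (q ^ m - q ^ j)) =
      q ^ ((finrank K x + finrank K y) * m) *
        ∏ j ∈ Finset.range m, (q ^ (finrank K V - (finrank K x + finrank K y)) - q ^ j) := by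
  have := Module.finite_of_finite K (M := V)
  let Φ (s : {s : Fin m → V // LinearIndependent K ((x ⊔ y).mkQ ∘ s)}) :
      {z : Submodule K V // x ≤ z ∧ finrank K z = finrank K x + m ∧ Disjoint z y} :=
    ⟨x ⊔ span K (Set.range s.1), le_sup_left,
      finrank_sup_span_of_linearIndependent_mkQ le_sup_left s.2,
      disjoint_sup_span_of_linearIndependent_mkQ hxy s.2⟩
  have hfiber (z) : Nat.card {s // Φ s = z} =
      q ^ (finrank K x * m) * ∏ j ∈ Finset.range m, (q ^ m - q ^ j) := by
    rw [← card_fiber_sup_span z.2.1 z.2.2.2 z.2.2.1]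
    exact Nat.card_congr (Equiv.subtypeEquivRight fun s => Subtype.ext_iff)
  rw [← Nat.card_eq_card_mul_of_card_fiber Φ hfiber, card_linearIndependent_comp, ker_mkQ,
    range_mkQ, finrank_top, finrank_quotient, finrank_sup_of_disjoint hxy]

theorem card_extensions_disjoint (hxy : Disjoint x y) {k : ℕ} (hk : finrank K x ≤ k) :
    (Nat.card {z : Submodule K V // x ≤ z ∧ finrank K z = k ∧ Disjoint z y} : ℝ) =
      (q : ℝ) ^ (finrank K y * (k - finrank K x)) *
        gbinom q ((finrank K V : ℤ) - finrank K x - finrank K y) ((k : ℤ) - finrank K x) := by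
  obtain ⟨m, rfl⟩ := Nat.exists_eq_add_of_le hk
  have hdim := finrank_add_finrank_le_of_disjoint hxy
  have hQ : (1 : ℝ) < q := by exact_mod_cast Fintype.one_lt_card
  have hD : ∏ j ∈ Finset.range m, ((q : ℝ) ^ m - (q : ℝ) ^ j) ≠ 0 :=
    Finset.prod_ne_zero_iff.2 fun j hj =>
      sub_ne_zero.2 (pow_lt_pow_right₀ hQ (Finset.mem_range.1 hj)).ne'
  have hcount := congrArg (Nat.cast : ℕ → ℝ) (card_extensions_disjoint_mul hxy m)
  push_cast [Nat.cast_prod_range_pow_sub_pow Fintype.card_pos] at hcount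
  rw [show (finrank K V : ℤ) - finrank K x - finrank K y =
      ((finrank K V - (finrank K x + finrank K y) : ℕ) : ℤ) by omega,
    show ((finrank K x + m : ℕ) : ℤ) - finrank K x = m by push_cast; ring,
    Nat.add_sub_cancel_left, gbinom_natCast (by positivity), ← mul_div_assoc, eq_div_iff hD]
  apply mul_left_cancel₀ (pow_ne_zero (finrank K x * m) (by positivity : (q : ℝ) ≠ 0))
  linear_combination hcount

end Extensions

section Matrices

variable {K V : Type*} [Field K] [AddCommGroup V] [Module K V]

open Classical

theorem Wmat_natCast_apply_of_le [FiniteDimensional K V] {i k : ℕ} (hik : i ≤ k)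
    (x z : Submodule K V) :
    Wmat K V i k x z = if finrank K x = i ∧ finrank K z = k ∧ x ≤ z then 1 else 0 := by
  have hle : finrank K ↥(x ⊓ z) = finrank K x ↔ x ≤ z :=
    ⟨fun h => inf_eq_left.1 (eq_of_le_of_finrank_eq inf_le_left h),
      fun h => by rw [inf_eq_left.2 h]⟩
  rw [Wmat, of_apply, min_eq_left (Int.ofNat_le.2 hik)]
  simp only [Nat.cast_inj]
  exact if_congr (and_congr_right fun hx => and_congr_right fun _ => hx ▸ hle) rfl rfl

theorem Wbarmat_natCast_apply (i l : ℕ) (x y : Submodule K V) :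
    Wbarmat K V i l x y = if finrank K x = i ∧ finrank K y = l ∧ Disjoint x y then 1 else 0 := by
  simp [Wbarmat, disjoint_iff]

theorem Wmat_mul_Wbarmat_apply [FiniteDimensional K V] [Fintype (Submodule K V)]
    {i k : ℕ} (l : ℕ) (hik : i ≤ k) (x y : Submodule K V) :
    (Wmat K V i k * Wbarmat K V k l) x y =
      if finrank K x = i ∧ finrank K y = l ∧ Disjoint x y then
        (Nat.card {z : Submodule K V // x ≤ z ∧ finrank K z = k ∧ Disjoint z y} : ℝ)
      else 0 := by
  simp only [mul_apply, Wmat_natCast_apply_of_le hik, Wbarmat_natCast_apply,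
    ite_zero_mul_ite_zero, one_mul, Finset.sum_boole]
  split_ifs with h
  · obtain ⟨hx, hy, -⟩ := h
    rw [Nat.card_eq_fintype_card, Fintype.card_subtype]
    congr 2
    ext z
    simp only [Finset.mem_filter, Finset.mem_univ, true_and, hx, hy]
    tauto
  · rw [Finset.card_eq_zero.2 (Finset.filter_eq_empty_iff.2 ?_), Nat.cast_zero]
    rintro z - ⟨⟨hx, -, hxz⟩, -, hy, hzy⟩
    exact h ⟨hx, hy, hzy.mono_left hxz⟩

end Matrices

theorem Wmat_mul_Wbarmat_general
    {K V : Type*} [Field K] [Fintype K] [AddCommGroup V] [Module K V] [FiniteDimensional K V]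
    [Fintype (Submodule K V)]
    (n i k l : ℕ) (hV : Module.finrank K V = n)
    (hik : i ≤ k) :
    Wmat K V i k * Wbarmat K V k l =
      ((Fintype.card K : ℝ) ^ (l * (k - i)) *
        gbinom (Fintype.card K) ((n : ℤ) - i - l) ((k : ℤ) - i)) • Wbarmat K V i l := by
  ext x y
  rw [Wmat_mul_Wbarmat_apply l hik, Matrix.smul_apply, Wbarmat_natCast_apply, smul_eq_mul]
  split_ifs with h
  · obtain ⟨rfl, rfl, hxy⟩ := h
    rw [mul_one, card_extensions_disjoint hxy hik, hV]
  · rw [mul_zero]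

/-- For `0 ≤ i ≤ k ≤ n` and `0 ≤ ℓ ≤ n`:
`W_{i,k} W̄_{k,ℓ} = q^{ℓ(k-i)} [n-i-ℓ choose k-i]_q • W̄_{i,ℓ}`. -/
theorem Wmat_mul_Wbarmat
    {K V : Type*} [Field K] [Fintype K] [AddCommGroup V] [Module K V] [FiniteDimensional K V]
    [Fintype (Submodule K V)]
    (n i k l : ℕ) (hV : Module.finrank K V = n)
    (hik : i ≤ k) (hkn : k ≤ n) (hln : l ≤ n) :
    Wmat K V i k * Wbarmat K V k l =
      ((Fintype.card K : ℝ) ^ (l * (k - i)) *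
        gbinom (Fintype.card K) ((n : ℤ) - i - l) ((k : ℤ) - i)) • Wbarmat K V i l :=
  Wmat_mul_Wbarmat_general n i k l hV hik
end

section
/- For integers k, ℓ with 0 ≤ k, ℓ ≤ n, the matrix identity W̄_{k,ℓ} = ∑_{h=0}^{min{k,ℓ}} (−1)^h q^{binom(h,2)} W_{k,h} W_{h,ℓ} holds, where binom(h,2) = h(h−1)/2. -/
open Matrix

/-!
When `dim x = k` and `dim y = ℓ`, the `(x, y)` entry of the right-hand side is the sum of
`μ(dim z) = (-1)^{dim z} q^{C(dim z, 2)}` over the subspaces `z ≤ x ⊓ y`, and `μ` is the Möbius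
function of the subspace lattice: this sum is `1` if `x ⊓ y = 0` and `0` otherwise. For the
vanishing, fix `v ≠ 0` in `x ⊓ y` and group the subspaces `z ∌ v` by `z ⊔ ⟨v⟩`. A subspace
`z' ∋ v` of dimension `d + 1` arises from exactly `q^d` of them, the complements of `⟨v⟩` in
`z'`, and `q^d μ(d) = -μ(d + 1)` cancels the term of `z'` itself.
-/

open Module Finset

section Complements

variable {K E : Type*} [Field K] [Fintype K] [AddCommGroup E] [Module K E] [FiniteDimensional K E]

/-- Complements of `p` are the kernels of the projections onto `p`, which form a coset of the
linear maps `E → p` vanishing on `p`. -/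
theorem Submodule.natCard_isCompl (p : Submodule K E) :
    Nat.card {q : Submodule K E // IsCompl p q} =
      Fintype.card K ^ (finrank K p * (finrank K E - finrank K p)) := by
  let restrict : (E →ₗ[K] p) →ₗ[K] (p →ₗ[K] p) := LinearMap.lcomp K p p.subtype
  obtain ⟨f₀, hf₀⟩ := p.subtype.exists_leftInverse_of_injective p.ker_subtype
  have hf₀x (x : p) : f₀ x = x := LinearMap.congr_fun hf₀ x
  have hrange : LinearMap.range restrict = ⊤ :=
    LinearMap.range_eq_top.2 fun g => ⟨g ∘ₗ f₀, by ext; simp [restrict, hf₀x]⟩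
  have hker : finrank K (LinearMap.ker restrict) = finrank K p * (finrank K E - finrank K p) := by
    have := LinearMap.finrank_range_add_finrank_ker restrict
    rw [hrange, finrank_top, finrank_linearMap, finrank_linearMap] at this
    rw [Nat.mul_sub, mul_comm (finrank K p) (finrank K E)]
    omega
  have hproj : {f : E →ₗ[K] p // ∀ x : p, f x = x} ≃ LinearMap.ker restrict :=
    (Equiv.subRight f₀).subtypeEquiv fun f => by
      simp [restrict, LinearMap.ext_iff, sub_eq_zero, hf₀x]
  rw [Nat.card_congr (p.isComplEquivProj.trans hproj), natCard_eq_pow_finrank (K := K), hker,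
    Nat.card_eq_fintype_card]

theorem Submodule.natCard_disjoint_sup_eq {a b : Submodule K E} (hab : a ≤ b) :
    Nat.card {z : Submodule K E // Disjoint a z ∧ a ⊔ z = b} =
      Fintype.card K ^ (finrank K a * (finrank K b - finrank K a)) := by
  set a' := a.comap b.subtype
  have ha' : (b.mapIic a' : Submodule K E) = a := by
    simp [a', map_comap_subtype, inf_eq_right.2 hab]
  have hfin : finrank K a' = finrank K a := by
    rw [← finrank_map_subtype_eq, ← coe_mapIic_apply, ha']
  rw [← hfin, ← natCard_isCompl a']
  refine (Nat.card_congr ((b.mapIic.toEquiv.subtypeEquiv fun u => ?_).trans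
    (Equiv.subtypeSubtypeEquivSubtype (p := (· ∈ Set.Iic b))
      (q := fun z => Disjoint a z ∧ a ⊔ z = b) fun h => h.2 ▸ Set.mem_Iic.2 le_sup_right))).symm
  rw [b.mapIic.isCompl_iff, Set.Iic.isCompl_iff, ha']
  rfl

end Complements

def subspaceMobius (q : ℝ) (h : ℕ) : ℝ := (-1) ^ h * q ^ h.choose 2

theorem subspaceMobius_zero (q : ℝ) : subspaceMobius q 0 = 1 := by
  simp [subspaceMobius]

theorem subspaceMobius_succ (q : ℝ) (h : ℕ) :
    subspaceMobius q (h + 1) = -(q ^ h * subspaceMobius q h) := by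
  simp only [subspaceMobius, Nat.choose_succ_succ, Nat.choose_one_right, pow_add, pow_succ]
  ring

section SubspaceMobius

variable {K W : Type*} [Field K] [Fintype K] [AddCommGroup W] [Module K W] [FiniteDimensional K W]

theorem sum_subspaceMobius_finrank_eq_zero [Nontrivial W] [Fintype (Submodule K W)] :
    ∑ z : Submodule K W, subspaceMobius (Fintype.card K) (finrank K z) = 0 := by
  classical
  obtain ⟨v, hv⟩ := exists_ne (0 : W)
  have hfiber : ∀ z' ∈ ({z' | v ∈ z'} : Finset (Submodule K W)),
      ∑ z ∈ {z | v ∉ z} with z ⊔ K ∙ v = z', subspaceMobius (Fintype.card K) (finrank K z) =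
        -subspaceMobius (Fintype.card K) (finrank K z') := by
    intro z' hz'
    have hvz' : v ∈ z' := (mem_filter.1 hz').2
    obtain ⟨d, hd⟩ : ∃ d, finrank K z' = d + 1 :=
      Nat.exists_eq_succ_of_ne_zero fun h => hv <| by
        simpa [Submodule.finrank_eq_zero.1 h] using hvz'
    have hdim : ∀ z ∈ ({z ∈ {z | v ∉ z} | z ⊔ K ∙ v = z'} : Finset (Submodule K W)),
        finrank K z = d := by
      intro z hz
      simp only [mem_filter, mem_univ, true_and] at hz
      have := Submodule.finrank_sup_span_singleton hz.1
      rw [hz.2, hd] at this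
      omega
    have hcard : #{z ∈ {z | v ∉ z} | z ⊔ K ∙ v = z'} = Fintype.card K ^ d := by
      have hcompl (z : Submodule K W) :
          v ∉ z ∧ z ⊔ K ∙ v = z' ↔ Disjoint (K ∙ v) z ∧ K ∙ v ⊔ z = z' := by
        rw [disjoint_comm, Submodule.disjoint_span_singleton' hv, sup_comm]
      rw [filter_filter, ← Fintype.card_subtype, ← Nat.card_eq_fintype_card,
        Nat.card_congr (Equiv.subtypeEquivRight hcompl),
        Submodule.natCard_disjoint_sup_eq ((Submodule.span_singleton_le_iff_mem v z').2 hvz'),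
        finrank_span_singleton hv, hd]
      simp
    rw [sum_congr rfl fun z hz => by rw [hdim z hz], sum_const, hcard, hd, subspaceMobius_succ]
    simp
  rw [← sum_filter_add_sum_filter_not univ (v ∈ ·),
    ← sum_fiberwise_of_maps_to (s := {z | v ∉ z}) (t := {z' | v ∈ z'}) (g := (· ⊔ K ∙ v)) ?_,
    ← sum_add_distrib]
  · exact sum_eq_zero fun z' hz' => by rw [hfiber z' hz', add_neg_cancel]
  · intro z _
    simpa using Submodule.mem_sup_right (Submodule.mem_span_singleton_self v)

open Classical in
theorem sum_subspaceMobius_finrank_filter_le [Fintype (Submodule K W)] (p : Submodule K W) :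
    ∑ z with z ≤ p, subspaceMobius (Fintype.card K) (finrank K z) = if p = ⊥ then 1 else 0 := by
  split_ifs with hp
  · subst hp
    simp [le_bot_iff, filter_eq', subspaceMobius_zero]
  · have := Submodule.nontrivial_iff_ne_bot.2 hp
    have : Finite (Submodule K p) := Finite.of_equiv _ p.mapIic.symm.toEquiv
    let := Fintype.ofFinite (Submodule K p)
    rw [← sum_subspaceMobius_finrank_eq_zero (K := K) (W := p),
      sum_subtype (p := (· ∈ Set.Iic p)) _ (by simp)]
    exact (Fintype.sum_equiv p.mapIic.toEquiv _ _ fun u =>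
      congrArg (subspaceMobius _) (p.finrank_map_subtype_eq u).symm).symm

end SubspaceMobius

section Wmat

variable {K V : Type*} [Field K] [AddCommGroup V] [Module K V] [FiniteDimensional K V]

theorem Submodule.finrank_inf_eq_right_iff {x z : Submodule K V} :
    finrank K ↥(x ⊓ z) = finrank K z ↔ z ≤ x :=
  ⟨fun h => inf_eq_right.1 (Submodule.eq_of_le_of_finrank_eq inf_le_right h),
    fun h => by rw [inf_eq_right.2 h]⟩

open Classical in
theorem Wmat_apply_of_ge {k h : ℕ} (hhk : h ≤ k) (x z : Submodule K V) :
    Wmat K V k h x z = if finrank K x = k ∧ finrank K z = h ∧ z ≤ x then 1 else 0 := by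
  rw [Wmat, of_apply, min_eq_right (Int.ofNat_le.2 hhk)]
  refine if_congr ?_ rfl rfl
  simp only [Nat.cast_inj, and_congr_right_iff]
  rintro - rfl
  exact Submodule.finrank_inf_eq_right_iff

open Classical in
theorem Wmat_apply_of_le {h l : ℕ} (hhl : h ≤ l) (z y : Submodule K V) :
    Wmat K V h l z y = if finrank K z = h ∧ finrank K y = l ∧ z ≤ y then 1 else 0 := by
  rw [Wmat, of_apply, min_eq_left (Int.ofNat_le.2 hhl), inf_comm]
  refine if_congr ?_ rfl rfl
  simp only [Nat.cast_inj, and_congr_right_iff]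
  rintro rfl -
  exact Submodule.finrank_inf_eq_right_iff

open Classical in
theorem Wmat_mul_Wmat_apply [Fintype (Submodule K V)] {k h l : ℕ} (hhk : h ≤ k) (hhl : h ≤ l)
    (x y : Submodule K V) :
    (Wmat K V k h * Wmat K V h l) x y =
      if finrank K x = k ∧ finrank K y = l then (#{z | z ≤ x ⊓ y ∧ finrank K z = h} : ℝ)
      else 0 := by
  simp only [mul_apply, Wmat_apply_of_ge hhk, Wmat_apply_of_le hhl, ite_zero_mul_ite_zero,
    one_mul]
  split_ifs with hxy
  · rw [← sum_boole]
    refine sum_congr rfl fun z _ => if_congr ?_ rfl rfl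
    rw [le_inf_iff]
    tauto
  · exact sum_eq_zero fun z _ => if_neg (by tauto)

end Wmat

theorem Wbarmat_eq_sum_general
    {K V : Type*} [Field K] [Fintype K] [AddCommGroup V] [Module K V] [FiniteDimensional K V]
    [Fintype (Submodule K V)]
    (k l : ℕ) :
    Wbarmat K V k l =
      ∑ h ∈ Finset.range (min k l + 1),
        ((-1 : ℝ) ^ h * (Fintype.card K : ℝ) ^ (h.choose 2)) • (Wmat K V k h * Wmat K V h l) := by
  classical
  ext x y
  simp only [Matrix.sum_apply, Matrix.smul_apply, smul_eq_mul]
  rw [sum_congr rfl fun h hh => by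
    have hh' := Nat.lt_succ_iff.1 (mem_range.1 hh)
    rw [Wmat_mul_Wmat_apply (hh'.trans (min_le_left k l)) (hh'.trans (min_le_right k l))]]
  by_cases hxy : finrank K x = k ∧ finrank K y = l
  · have hrange : ∀ z ∈ ({z | z ≤ x ⊓ y} : Finset (Submodule K V)),
        finrank K z ∈ range (min k l + 1) := fun z hz => by
      have hzxy := (mem_filter.1 hz).2
      have := Submodule.finrank_mono (hzxy.trans inf_le_left)
      have := Submodule.finrank_mono (hzxy.trans inf_le_right)
      rw [mem_range]
      omega
    calc Wbarmat K V k l x y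
        _ = ∑ z with z ≤ x ⊓ y, subspaceMobius (Fintype.card K) (finrank K z) := by
          rw [sum_subspaceMobius_finrank_filter_le]
          simp [Wbarmat, hxy]
        _ = _ := by
          rw [← sum_fiberwise_of_maps_to hrange]
          refine sum_congr rfl fun h _ => ?_
          rw [if_pos hxy, filter_filter,
            sum_congr rfl fun z hz => by rw [(mem_filter.1 hz).2.2], sum_const, nsmul_eq_mul,
            mul_comm, subspaceMobius]
  · rw [Wbarmat, of_apply, if_neg fun h => hxy ⟨by exact_mod_cast h.1, by exact_mod_cast h.2.1⟩]
    simp [hxy]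

/-- For `0 ≤ k, ℓ ≤ n`: `W̄_{k,ℓ} = ∑_{h=0}^{min(k,ℓ)} (-1)^h q^{C(h,2)} W_{k,h} W_{h,ℓ}`. -/
theorem Wbarmat_eq_sum
    {K V : Type*} [Field K] [Fintype K] [AddCommGroup V] [Module K V] [FiniteDimensional K V]
    [Fintype (Submodule K V)]
    (n k l : ℕ) (hV : Module.finrank K V = n) (hkn : k ≤ n) (hln : l ≤ n) :
    Wbarmat K V k l =
      ∑ h ∈ Finset.range (min k l + 1),
        ((-1 : ℝ) ^ h * (Fintype.card K : ℝ) ^ (h.choose 2)) • (Wmat K V k h * Wmat K V h l) :=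
  Wbarmat_eq_sum_general k l
end

section
/- For i = 0,…,⌊n/2⌋, k = 0,…,n and u ∈ U_i, the identity W̄_{k,i} u = (−1)^i q^{binom(i,2)} W_{k,i} u holds, where binom(i,2) = i(i−1)/2. -/
open Matrix

/-- The subspace `U_i ⊆ ℝ^{L(V)}` of vectors supported on `L_i(V)` and killed by
`W_{i-1,i}`. -/
noncomputable def Usub (K V : Type*) [Field K] [AddCommGroup V] [Module K V]
    [Fintype (Submodule K V)] (i : ℕ) : Submodule ℝ (Submodule K V → ℝ) :=
  LinearMap.ker (Matrix.mulVecLin (Wmat K V ((i : ℤ) - 1) (i : ℤ))) ⊓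
    ⨅ x ∈ {x : Submodule K V | Module.finrank K x ≠ i},
      LinearMap.ker (LinearMap.proj (R := ℝ) (φ := fun _ : Submodule K V => ℝ) x)

section Aux

open Module Finset
open scoped Classical

variable {K V : Type*} [Field K] [Fintype K] [AddCommGroup V] [Module K V] [FiniteDimensional K V]

private lemma aux_finrank_sup_span {w : Submodule K V} {x : V} (hx : x ∉ w) :
    finrank K ↥(w ⊔ Submodule.span K {x}) = finrank K w + 1 := by
  have hx0 : x ≠ 0 := by rintro rfl; exact hx w.zero_mem
  have hinf : w ⊓ Submodule.span K {x} = ⊥ := by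
    rw [eq_bot_iff]
    intro v hv
    rw [Submodule.mem_inf] at hv
    obtain ⟨c, rfl⟩ := Submodule.mem_span_singleton.mp hv.2
    rcases eq_or_ne c 0 with rfl | hc
    · simp
    · have := w.smul_mem c⁻¹ hv.1
      rw [smul_smul, inv_mul_cancel₀ hc, one_smul] at this
      exact absurd this hx
  have h := Submodule.finrank_sup_add_finrank_inf_eq w (Submodule.span K {x})
  rw [hinf, finrank_span_singleton hx0, finrank_bot] at h
  omega

private lemma aux_card_mem [Fintype V] (p : Submodule K V) :
    (Finset.univ.filter (fun x : V => x ∈ p)).card = Fintype.card K ^ finrank K p := by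
  rw [← Fintype.card_subtype]
  exact card_eq_pow_finrank

private lemma aux_card_mem_sdiff [Fintype V] {w y : Submodule K V} (h : w ≤ y) :
    (Finset.univ.filter (fun x : V => x ∈ y ∧ x ∉ w)).card
      = Fintype.card K ^ finrank K y - Fintype.card K ^ finrank K w := by
  have e1 : (Finset.univ.filter (fun x : V => x ∈ y ∧ x ∉ w))
      = (Finset.univ.filter (fun x : V => x ∈ y)) \ (Finset.univ.filter (fun x : V => x ∈ w)) := by
    ext x
    simp only [mem_filter, mem_sdiff, mem_univ, true_and]
  have hsub : (Finset.univ.filter (fun x : V => x ∈ w))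
      ⊆ (Finset.univ.filter (fun x : V => x ∈ y)) := by
    intro x hx
    simp only [mem_filter, mem_univ, true_and] at *
    exact h hx
  rw [e1, card_sdiff_of_subset hsub, aux_card_mem, aux_card_mem]

/-- The number of one-step extensions of `w` inside `y`, times `q^(d_w+1) - q^(d_w)`,
equals `q^(d_y) - q^(d_w)`. -/
private lemma aux_covers [Fintype (Submodule K V)] (w y : Submodule K V) (hwy : w ≤ y) :
    (Finset.univ.filter (fun z : Submodule K V =>
        w ≤ z ∧ z ≤ y ∧ finrank K z = finrank K w + 1)).card *
      (Fintype.card K ^ (finrank K w + 1) - Fintype.card K ^ finrank K w)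
    = Fintype.card K ^ finrank K y - Fintype.card K ^ finrank K w := by
  have : Finite V := Module.finite_of_finite K
  have : Fintype V := Fintype.ofFinite V
  set B := Finset.univ.filter (fun z : Submodule K V =>
      w ≤ z ∧ z ≤ y ∧ finrank K z = finrank K w + 1) with hB
  set A := Finset.univ.filter (fun x : V => x ∈ y ∧ x ∉ w) with hA
  have hmaps : ∀ x ∈ A, w ⊔ Submodule.span K {x} ∈ B := by
    intro x hx
    simp only [hA, mem_filter, mem_univ, true_and] at hx
    simp only [hB, mem_filter, mem_univ, true_and]
    refine ⟨le_sup_left, ?_, aux_finrank_sup_span hx.2⟩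
    exact sup_le hwy ((Submodule.span_singleton_le_iff_mem _ _).mpr hx.1)
  have hcount := Finset.card_eq_sum_card_fiberwise hmaps
  have hfiber : ∀ z ∈ B, (A.filter (fun x => w ⊔ Submodule.span K {x} = z)).card
      = Fintype.card K ^ (finrank K w + 1) - Fintype.card K ^ finrank K w := by
    intro z hz
    simp only [hB, mem_filter, mem_univ, true_and] at hz
    obtain ⟨hwz, hzy, hdz⟩ := hz
    have e : A.filter (fun x => w ⊔ Submodule.span K {x} = z)
        = Finset.univ.filter (fun x : V => x ∈ z ∧ x ∉ w) := by
      ext x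
      simp only [hA, filter_filter, mem_filter, mem_univ, true_and, and_assoc]
      constructor
      · rintro ⟨hxy, hxw, rfl⟩
        exact ⟨Submodule.mem_sup_right (Submodule.mem_span_singleton_self x), hxw⟩
      · rintro ⟨hxz, hxw⟩
        refine ⟨hzy hxz, hxw, ?_⟩
        refine Submodule.eq_of_le_of_finrank_le
          (sup_le hwz ((Submodule.span_singleton_le_iff_mem _ _).mpr hxz)) ?_
        rw [hdz, aux_finrank_sup_span hxw]
    rw [e, aux_card_mem_sdiff hwz, hdz]
  rw [Finset.sum_congr rfl hfiber, Finset.sum_const, smul_eq_mul] at hcount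
  rw [← hcount, hA]
  exact aux_card_mem_sdiff hwy

private lemma aux_hyperplane (v : Submodule K V) (hv : v ≠ ⊥) :
    ∃ H : Submodule K V, H ≤ v ∧ finrank K H + 1 = finrank K v := by
  obtain ⟨s, hcard, hli⟩ := exists_finset_linearIndependent_of_le_finrank
    (R := K) (M := ↥v) (n := finrank K ↥v - 1) (Nat.sub_le _ _)
  refine ⟨Submodule.map v.subtype (Submodule.span K (s : Set ↥v)),
    Submodule.map_subtype_le _ _, ?_⟩
  rw [Submodule.finrank_map_subtype_eq, finrank_span_finset_eq_card hli, hcard]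
  have : finrank K ↥v ≠ 0 := fun h => hv (Submodule.finrank_eq_zero.mp h)
  omega

/-- The Möbius-function identity for the lattice of subspaces. -/
private lemma aux_mobius [Fintype (Submodule K V)] (v : Submodule K V) :
    ∑ w ∈ Finset.univ.filter (fun w : Submodule K V => w ≤ v),
      ((-1 : ℝ) ^ finrank K w * (Fintype.card K : ℝ) ^ ((finrank K w).choose 2))
    = if v = ⊥ then 1 else 0 := by
  suffices H : ∀ (m : ℕ) (v : Submodule K V), finrank K v ≤ m →
      ∑ w ∈ Finset.univ.filter (fun w : Submodule K V => w ≤ v),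
        ((-1 : ℝ) ^ finrank K w * (Fintype.card K : ℝ) ^ ((finrank K w).choose 2))
      = if v = ⊥ then 1 else 0 from H (finrank K v) v le_rfl
  intro m
  induction m with
  | zero =>
    intro v hv
    have hvb : v = ⊥ := Submodule.finrank_eq_zero.mp (Nat.le_zero.mp hv)
    subst hvb
    have e : Finset.univ.filter (fun w : Submodule K V => w ≤ (⊥ : Submodule K V))
        = {(⊥ : Submodule K V)} := by
      ext w; simp [le_bot_iff]
    rw [e]
    simp [finrank_bot]
  | succ m IH =>
    intro v hv
    by_cases hvb : v = ⊥
    · subst hvb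
      have e : Finset.univ.filter (fun w : Submodule K V => w ≤ (⊥ : Submodule K V))
          = {(⊥ : Submodule K V)} := by
        ext w; simp [le_bot_iff]
      rw [e]
      simp [finrank_bot]
    · obtain ⟨H, hHv, hHrank⟩ := aux_hyperplane v hvb
      have hHm : finrank K H ≤ m := by omega
      set μ : Submodule K V → ℝ :=
        fun w => (-1 : ℝ) ^ finrank K w * (Fintype.card K : ℝ) ^ ((finrank K w).choose 2)
        with hμ
      have hsplit := Finset.sum_filter_add_sum_filter_not
        (Finset.univ.filter (fun w : Submodule K V => w ≤ v)) (fun w => w ≤ H) μ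
      have e1 : (Finset.univ.filter (fun w : Submodule K V => w ≤ v)).filter (fun w => w ≤ H)
          = Finset.univ.filter (fun w : Submodule K V => w ≤ H) := by
        ext w
        simp only [filter_filter, mem_filter, mem_univ, true_and]
        exact ⟨fun h => h.2, fun h => ⟨h.trans hHv, h⟩⟩
      -- the second sum, via fibering over w ⊓ H
      have hfib := Finset.sum_fiberwise_of_maps_to
        (g := fun w : Submodule K V => w ⊓ H)
        (t := Finset.univ.filter (fun u : Submodule K V => u ≤ H))
        (s := (Finset.univ.filter (fun w : Submodule K V => w ≤ v)).filter (fun w => ¬ w ≤ H))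
        (by intro w _; simp only [mem_filter, mem_univ, true_and]; exact inf_le_right) μ
      have hinner : ∀ u ∈ Finset.univ.filter (fun u : Submodule K V => u ≤ H),
          ∑ w ∈ ((Finset.univ.filter (fun w : Submodule K V => w ≤ v)).filter
              (fun w => ¬ w ≤ H)).filter (fun w => w ⊓ H = u), μ w
          = -(Fintype.card K : ℝ) ^ finrank K H * μ u := by
        intro u hu
        simp only [mem_filter, mem_univ, true_and] at hu
        have huv : u ≤ v := hu.trans hHv
        have hduH : finrank K u ≤ finrank K H := Submodule.finrank_mono hu
        -- identify the fiber
        have efib : ((Finset.univ.filter (fun w : Submodule K V => w ≤ v)).filter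
              (fun w => ¬ w ≤ H)).filter (fun w => w ⊓ H = u)
            = (Finset.univ.filter (fun z : Submodule K V =>
                u ≤ z ∧ z ≤ v ∧ finrank K z = finrank K u + 1))
              \ (Finset.univ.filter (fun z : Submodule K V =>
                u ≤ z ∧ z ≤ H ∧ finrank K z = finrank K u + 1)) := by
          ext w
          simp only [filter_filter, mem_filter, mem_sdiff, mem_univ, true_and]
          constructor
          · rintro ⟨⟨hwv, hwH⟩, hwu⟩
            have hsupv : w ⊔ H = v := by
              have hlt : H < w ⊔ H := by
                refine lt_of_le_of_ne le_sup_right fun h => hwH ?_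
                rw [h]; exact le_sup_left
              have h1 : finrank K H < finrank K ↥(w ⊔ H) :=
                Submodule.finrank_lt_finrank_of_lt hlt
              have h2 : w ⊔ H ≤ v := sup_le hwv hHv
              exact Submodule.eq_of_le_of_finrank_le h2 (by
                have := Submodule.finrank_mono h2; omega)
            have hmod := Submodule.finrank_sup_add_finrank_inf_eq w H
            rw [hsupv, hwu] at hmod
            have hdw : finrank K w = finrank K u + 1 := by omega
            refine ⟨⟨hwu ▸ inf_le_left, hwv, hdw⟩, ?_⟩
            rintro ⟨-, hwH', -⟩
            exact hwH hwH'
          · rintro ⟨⟨huw, hwv, hdw⟩, hnot⟩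
            have hwH : ¬ w ≤ H := fun h => hnot ⟨huw, h, hdw⟩
            refine ⟨⟨hwv, hwH⟩, ?_⟩
            have hle : u ≤ w ⊓ H := le_inf huw hu
            have hlt : w ⊓ H < w := by
              refine lt_of_le_of_ne inf_le_left fun h => hwH ?_
              rw [← h]; exact inf_le_right
            have h1 : finrank K ↥(w ⊓ H) < finrank K w :=
              Submodule.finrank_lt_finrank_of_lt hlt
            have h2 : finrank K u ≤ finrank K ↥(w ⊓ H) := Submodule.finrank_mono hle
            exact (Submodule.eq_of_le_of_finrank_le hle (by omega)).symm
        -- count the fiber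
        have hsub2 : (Finset.univ.filter (fun z : Submodule K V =>
              u ≤ z ∧ z ≤ H ∧ finrank K z = finrank K u + 1))
            ⊆ (Finset.univ.filter (fun z : Submodule K V =>
              u ≤ z ∧ z ≤ v ∧ finrank K z = finrank K u + 1)) := by
          intro z hz
          simp only [mem_filter, mem_univ, true_and] at *
          exact ⟨hz.1, hz.2.1.trans hHv, hz.2.2⟩
        have hc1 := aux_covers u v huv
        have hc2 := aux_covers u H hu
        have hq1 : 1 < Fintype.card K := Fintype.one_lt_card
        have hpos : 0 < Fintype.card K ^ (finrank K u + 1) - Fintype.card K ^ finrank K u := by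
          have : Fintype.card K ^ finrank K u < Fintype.card K ^ (finrank K u + 1) :=
            Nat.pow_lt_pow_right hq1 (by omega)
          omega
        have hcard : (((Finset.univ.filter (fun w : Submodule K V => w ≤ v)).filter
              (fun w => ¬ w ≤ H)).filter (fun w => w ⊓ H = u)).card
            = Fintype.card K ^ (finrank K H - finrank K u) := by
          rw [efib, card_sdiff_of_subset hsub2]
          refine Nat.eq_of_mul_eq_mul_right hpos ?_
          rw [Nat.sub_mul, hc1, hc2]
          have e2 : Fintype.card K ^ (finrank K H - finrank K u) *
              (Fintype.card K ^ (finrank K u + 1) - Fintype.card K ^ finrank K u)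
              = Fintype.card K ^ (finrank K H + 1) - Fintype.card K ^ finrank K H := by
            rw [Nat.mul_sub, ← pow_add, ← pow_add]
            congr 2 <;> omega
          rw [e2, ← hHrank]
          have m1 : Fintype.card K ^ finrank K u ≤ Fintype.card K ^ finrank K H :=
            Nat.pow_le_pow_right (le_of_lt hq1) hduH
          have m2 : Fintype.card K ^ finrank K H < Fintype.card K ^ (finrank K H + 1) :=
            Nat.pow_lt_pow_right hq1 (Nat.lt_succ_self _)
          omega
        have hval : ∀ w ∈ ((Finset.univ.filter (fun w : Submodule K V => w ≤ v)).filter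
              (fun w => ¬ w ≤ H)).filter (fun w => w ⊓ H = u),
            μ w = (-1 : ℝ) ^ (finrank K u + 1) *
              (Fintype.card K : ℝ) ^ ((finrank K u + 1).choose 2) := by
          intro w hw
          rw [efib] at hw
          simp only [mem_sdiff, mem_filter, mem_univ, true_and] at hw
          rw [hμ]
          simp only [hw.1.2.2]
        rw [Finset.sum_eq_card_nsmul hval, hcard, nsmul_eq_mul]
        have hch : (finrank K u + 1).choose 2 = (finrank K u).choose 2 + finrank K u := by
          rw [Nat.choose_succ_succ]
          simp [Nat.choose_one_right, Nat.add_comm]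
        have hexp : (Fintype.card K : ℝ) ^ (finrank K H - finrank K u) *
            (Fintype.card K : ℝ) ^ ((finrank K u).choose 2 + finrank K u)
            = (Fintype.card K : ℝ) ^ finrank K H *
              (Fintype.card K : ℝ) ^ ((finrank K u).choose 2) := by
          rw [← pow_add, ← pow_add]
          congr 1
          omega
        rw [hch, hμ]
        push_cast
        linear_combination ((-1 : ℝ) ^ finrank K u * (-1)) * hexp
      rw [Finset.sum_congr rfl hinner] at hfib
      rw [← Finset.mul_sum, IH H hHm] at hfib
      rw [← hsplit, e1, IH H hHm, ← hfib]
      by_cases hHb : H = ⊥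
      · subst hHb
        simp only [if_pos rfl, if_neg hvb, finrank_bot]
        norm_num
      · simp [if_neg hHb, if_neg hvb]

/-- If `u` is killed by `W_{i-1,i}` then sums of `u` over `i`-dim spaces containing a fixed
space of dimension `< i` vanish. -/
private lemma aux_ker_ext [Fintype (Submodule K V)] (i : ℕ) (u : Submodule K V → ℝ)
    (h1 : (Wmat K V ((i : ℤ) - 1) (i : ℤ)).mulVec u = 0) :
    ∀ w : Submodule K V, finrank K w < i →
      ∑ y ∈ Finset.univ.filter
        (fun y : Submodule K V => finrank K y = i ∧ w ≤ y), u y = 0 := by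
  suffices Hs : ∀ (t : ℕ) (w : Submodule K V), finrank K w + t + 1 = i →
      ∑ y ∈ Finset.univ.filter
        (fun y : Submodule K V => finrank K y = i ∧ w ≤ y), u y = 0 by
    intro w hw
    exact Hs (i - finrank K w - 1) w (by omega)
  intro t
  induction t with
  | zero =>
    intro w hw
    have h0 : ∑ y : Submodule K V, (Wmat K V ((i : ℤ) - 1) (i : ℤ)) w y * u y = 0 := by
      have := congrFun h1 w
      simpa [Matrix.mulVec, dotProduct] using this
    have e : ∀ y : Submodule K V, (Wmat K V ((i : ℤ) - 1) (i : ℤ)) w y * u y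
        = if finrank K y = i ∧ w ≤ y then u y else 0 := by
      intro y
      have hmin : min ((i : ℤ) - 1) (i : ℤ) = (i : ℤ) - 1 := min_eq_left (by omega)
      have hcond : ((finrank K w : ℤ) = (i : ℤ) - 1 ∧ (finrank K y : ℤ) = (i : ℤ) ∧
            ((finrank K ↥(w ⊓ y) : ℤ) = min ((i : ℤ) - 1) (i : ℤ)))
          ↔ (finrank K y = i ∧ w ≤ y) := by
        rw [hmin]
        constructor
        · rintro ⟨-, hy, hiy⟩
          have hyn : finrank K y = i := by exact_mod_cast hy
          have h3 : finrank K ↥(w ⊓ y) = finrank K w := by omega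
          have h4 := Submodule.eq_of_le_of_finrank_le (inf_le_left : w ⊓ y ≤ w)
            (le_of_eq h3.symm)
          exact ⟨hyn, inf_eq_left.mp h4⟩
        · rintro ⟨hy, hwy⟩
          have hinf : w ⊓ y = w := inf_eq_left.mpr hwy
          refine ⟨by omega, by exact_mod_cast hy, ?_⟩
          rw [hinf]; omega
      rw [Wmat]
      simp only [Matrix.of_apply]
      by_cases hc : finrank K y = i ∧ w ≤ y
      · rw [if_pos (hcond.mpr hc), if_pos hc, one_mul]
      · rw [if_neg (fun h => hc (hcond.mp h)), if_neg hc, zero_mul]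
    have e' : ∑ y ∈ Finset.univ.filter
          (fun y : Submodule K V => finrank K y = i ∧ w ≤ y), u y
        = ∑ y : Submodule K V, (Wmat K V ((i : ℤ) - 1) (i : ℤ)) w y * u y := by
      rw [Finset.sum_filter]
      exact Finset.sum_congr rfl fun y _ => (e y).symm
    rw [e', h0]
  | succ t IH =>
    intro w hw
    set Z := Finset.univ.filter
      (fun z : Submodule K V => w ≤ z ∧ finrank K z = finrank K w + 1) with hZ
    have hdouble : ∑ z ∈ Z, ∑ y ∈ Finset.univ.filter
        (fun y : Submodule K V => finrank K y = i ∧ z ≤ y), u y = 0 := by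
      refine Finset.sum_eq_zero fun z hz => ?_
      simp only [hZ, mem_filter, mem_univ, true_and] at hz
      exact IH z (by omega)
    have e1 : ∀ z ∈ Z, (∑ y ∈ Finset.univ.filter
          (fun y : Submodule K V => finrank K y = i ∧ z ≤ y), u y)
        = ∑ y : Submodule K V, if finrank K y = i ∧ z ≤ y then u y else 0 :=
      fun z _ => by rw [Finset.sum_filter]
    rw [Finset.sum_congr rfl e1, Finset.sum_comm] at hdouble
    have e2 : ∀ y : Submodule K V,
        (∑ z ∈ Z, if finrank K y = i ∧ z ≤ y then u y else 0)
        = ((Z.filter (fun z => finrank K y = i ∧ z ≤ y)).card : ℝ) * u y := by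
      intro y
      rw [← Finset.sum_filter, Finset.sum_const, nsmul_eq_mul]
    rw [Finset.sum_congr rfl (fun y _ => e2 y)] at hdouble
    have e3 : ∀ y : Submodule K V,
        (Z.filter (fun z => finrank K y = i ∧ z ≤ y)).card *
          (Fintype.card K ^ (finrank K w + 1) - Fintype.card K ^ finrank K w)
        = if finrank K y = i ∧ w ≤ y
            then Fintype.card K ^ i - Fintype.card K ^ finrank K w else 0 := by
      intro y
      by_cases hcy : finrank K y = i ∧ w ≤ y
      · have ez : Z.filter (fun z => finrank K y = i ∧ z ≤ y)
            = Finset.univ.filter (fun z : Submodule K V =>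
                w ≤ z ∧ z ≤ y ∧ finrank K z = finrank K w + 1) := by
          ext z
          simp only [hZ, filter_filter, mem_filter, mem_univ, true_and]
          constructor
          · rintro ⟨⟨hwz, hdz⟩, -, hzy⟩
            exact ⟨hwz, hzy, hdz⟩
          · rintro ⟨hwz, hzy, hdz⟩
            exact ⟨⟨hwz, hdz⟩, hcy.1, hzy⟩
        rw [ez, aux_covers w y hcy.2, if_pos hcy, hcy.1]
      · rw [if_neg hcy]
        have ez : Z.filter (fun z => finrank K y = i ∧ z ≤ y) = ∅ := by
          rw [Finset.filter_eq_empty_iff]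
          intro z hz
          simp only [hZ, mem_filter, mem_univ, true_and] at hz
          rintro ⟨hyi, hzy⟩
          exact hcy ⟨hyi, hz.1.trans hzy⟩
        rw [ez]
        simp
    have h5 : ∑ y : Submodule K V,
        (((Z.filter (fun z => finrank K y = i ∧ z ≤ y)).card *
          (Fintype.card K ^ (finrank K w + 1) - Fintype.card K ^ finrank K w) : ℕ) : ℝ) * u y
        = 0 := by
      have hmul := congrArg
        (((Fintype.card K ^ (finrank K w + 1) - Fintype.card K ^ finrank K w : ℕ) : ℝ) * ·)
        hdouble
      simp only [mul_zero, Finset.mul_sum] at hmul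
      rw [← hmul]
      refine Finset.sum_congr rfl fun y _ => ?_
      push_cast
      ring
    simp only [e3] at h5
    have h6 : ((Fintype.card K ^ i - Fintype.card K ^ finrank K w : ℕ) : ℝ) *
        (∑ y ∈ Finset.univ.filter
          (fun y : Submodule K V => finrank K y = i ∧ w ≤ y), u y) = 0 := by
      have e' : (∑ y : Submodule K V,
            (((if finrank K y = i ∧ w ≤ y
                then Fintype.card K ^ i - Fintype.card K ^ finrank K w else 0 : ℕ)) : ℝ) * u y)
          = ((Fintype.card K ^ i - Fintype.card K ^ finrank K w : ℕ) : ℝ) *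
            ∑ y ∈ Finset.univ.filter
              (fun y : Submodule K V => finrank K y = i ∧ w ≤ y), u y := by
        rw [Finset.mul_sum, Finset.sum_filter]
        refine Finset.sum_congr rfl fun y _ => ?_
        by_cases hc : finrank K y = i ∧ w ≤ y <;> simp [hc]
      rw [← e']
      exact h5
    have hE : ((Fintype.card K ^ i - Fintype.card K ^ finrank K w : ℕ) : ℝ) ≠ 0 := by
      have h := Nat.pow_lt_pow_right (Fintype.one_lt_card (α := K))
        (show finrank K w < i by omega)
      have h' : Fintype.card K ^ i - Fintype.card K ^ finrank K w ≠ 0 := by omega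
      exact_mod_cast h'
    rcases mul_eq_zero.mp h6 with h | h
    · exact absurd h hE
    · exact h

end Aux

/-- For `0 ≤ i ≤ ⌊n/2⌋`, `0 ≤ k ≤ n` and `u ∈ U_i`:
`W̄_{k,i} u = (-1)^i q^{C(i,2)} W_{k,i} u`. -/
theorem Wbarmat_mulVec_eq
    {K V : Type*} [Field K] [Fintype K] [AddCommGroup V] [Module K V] [FiniteDimensional K V]
    [Fintype (Submodule K V)]
    (n i k : ℕ) (hV : Module.finrank K V = n) (hi : i ≤ n / 2) (hk : k ≤ n)
    (u : Submodule K V → ℝ) (hu : u ∈ Usub K V i) :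
    (Wbarmat K V k i).mulVec u =
      ((-1 : ℝ) ^ i * (Fintype.card K : ℝ) ^ (i.choose 2)) • (Wmat K V k i).mulVec u := by
  classical
  obtain ⟨hu1, hu2⟩ := Submodule.mem_inf.mp hu
  have h1 : (Wmat K V ((i : ℤ) - 1) (i : ℤ)).mulVec u = 0 := by
    have := LinearMap.mem_ker.mp hu1
    rwa [Matrix.mulVecLin_apply] at this
  have h0 : ∀ y : Submodule K V, Module.finrank K y ≠ i → u y = 0 := by
    intro y hy
    have h2 := (Submodule.mem_iInf _).mp hu2 y
    have h3 := (Submodule.mem_iInf _).mp h2 hy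
    exact LinearMap.mem_ker.mp h3
  funext x
  have lhs_eq : (Wbarmat K V k i).mulVec u x
      = ∑ y : Submodule K V, Wbarmat K V k i x y * u y := by
    simp [Matrix.mulVec, dotProduct]
  have rhs_eq : (((-1 : ℝ) ^ i * (Fintype.card K : ℝ) ^ (i.choose 2)) •
        (Wmat K V k i).mulVec u) x
      = ((-1 : ℝ) ^ i * (Fintype.card K : ℝ) ^ (i.choose 2)) *
        ∑ y : Submodule K V, Wmat K V k i x y * u y := by
    have e0 : (Wmat K V k i).mulVec u x
        = ∑ y : Submodule K V, Wmat K V k i x y * u y := by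
      simp [Matrix.mulVec, dotProduct]
    rw [Pi.smul_apply, e0, smul_eq_mul]
  rw [lhs_eq, rhs_eq]
  by_cases hxk : Module.finrank K x = k
  case neg =>
    have hz1 : ∀ y : Submodule K V, Wbarmat K V k i x y = 0 := fun y => by
      rw [Wbarmat]
      simp only [Matrix.of_apply]
      rw [if_neg]
      rintro ⟨h, -⟩
      exact hxk (by exact_mod_cast h)
    have hz2 : ∀ y : Submodule K V, Wmat K V k i x y = 0 := fun y => by
      rw [Wmat]
      simp only [Matrix.of_apply]
      rw [if_neg]
      rintro ⟨h, -⟩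
      exact hxk (by exact_mod_cast h)
    simp [hz1, hz2]
  case pos =>
  set μi : ℝ := (-1 : ℝ) ^ i * (Fintype.card K : ℝ) ^ (i.choose 2) with hμi
  set μ : Submodule K V → ℝ := fun w =>
    (-1 : ℝ) ^ Module.finrank K w *
      (Fintype.card K : ℝ) ^ ((Module.finrank K w).choose 2) with hμ
  set T : Submodule K V → ℝ := fun w =>
    ∑ y ∈ Finset.univ.filter
      (fun y : Submodule K V => Module.finrank K y = i ∧ w ≤ y), u y with hT
  have hTzero : ∀ w : Submodule K V, Module.finrank K w < i → T w = 0 := by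
    intro w hw
    have := aux_ker_ext i u h1 w hw
    simp only [hT]
    exact this
  -- entrywise simplifications
  have eL : ∀ y : Submodule K V, Wbarmat K V k i x y * u y
      = if Module.finrank K y = i ∧ x ⊓ y = ⊥ then u y else 0 := by
    intro y
    rw [Wbarmat]
    simp only [Matrix.of_apply]
    by_cases hc : Module.finrank K y = i ∧ x ⊓ y = ⊥
    · rw [if_pos ⟨by exact_mod_cast hxk, by exact_mod_cast hc.1, hc.2⟩, if_pos hc, one_mul]
    · rw [if_neg, if_neg hc, zero_mul]
      rintro ⟨-, h2, h3⟩
      exact hc ⟨by exact_mod_cast h2, h3⟩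
  have hmin : min (k : ℤ) (i : ℤ) = ((min k i : ℕ) : ℤ) := by
    rcases le_total k i with h | h
    · rw [min_eq_left (by exact_mod_cast h), min_eq_left h]
    · rw [min_eq_right (by exact_mod_cast h), min_eq_right h]
  have eR : ∀ y : Submodule K V, Wmat K V k i x y * u y
      = if Module.finrank K y = i ∧ Module.finrank K ↥(x ⊓ y) = min k i
          then u y else 0 := by
    intro y
    rw [Wmat]
    simp only [Matrix.of_apply]
    by_cases hc : Module.finrank K y = i ∧ Module.finrank K ↥(x ⊓ y) = min k i
    · rw [if_pos ⟨by exact_mod_cast hxk, by exact_mod_cast hc.1,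
        by rw [hmin]; exact_mod_cast hc.2⟩, if_pos hc, one_mul]
    · rw [if_neg, if_neg hc, zero_mul]
      rintro ⟨-, h2, h3⟩
      rw [hmin] at h3
      exact hc ⟨by exact_mod_cast h2, by exact_mod_cast h3⟩
  have SL : ∑ y : Submodule K V, Wbarmat K V k i x y * u y
      = ∑ y ∈ Finset.univ.filter
          (fun y : Submodule K V => Module.finrank K y = i ∧ x ⊓ y = ⊥), u y := by
    rw [Finset.sum_filter]
    exact Finset.sum_congr rfl fun y _ => eL y
  have SR : ∑ y : Submodule K V, Wmat K V k i x y * u y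
      = ∑ y ∈ Finset.univ.filter (fun y : Submodule K V =>
          Module.finrank K y = i ∧ Module.finrank K ↥(x ⊓ y) = min k i), u y := by
    rw [Finset.sum_filter]
    exact Finset.sum_congr rfl fun y _ => eR y
  -- Claim A : Möbius inversion of the disjointness condition
  have claimA : ∑ y ∈ Finset.univ.filter
        (fun y : Submodule K V => Module.finrank K y = i ∧ x ⊓ y = ⊥), u y
      = ∑ w ∈ Finset.univ.filter (fun w : Submodule K V => w ≤ x), μ w * T w := by
    have step1 : ∀ w : Submodule K V,
        (if w ≤ x then μ w * T w else 0)
        = ∑ y : Submodule K V,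
            (if w ≤ x ∧ (Module.finrank K y = i ∧ w ≤ y) then μ w * u y else 0) := by
      intro w
      by_cases hw : w ≤ x
      · rw [if_pos hw]
        simp only [hT]
        rw [Finset.mul_sum, Finset.sum_filter]
        refine Finset.sum_congr rfl fun y _ => ?_
        by_cases hc : Module.finrank K y = i ∧ w ≤ y
        · rw [if_pos hc, if_pos ⟨hw, hc⟩]
        · rw [if_neg hc, if_neg (by tauto)]
      · rw [if_neg hw]
        exact (Finset.sum_eq_zero fun y _ => if_neg (by tauto)).symm
    have step2 : ∀ y : Submodule K V,
        (∑ w : Submodule K V,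
          if w ≤ x ∧ (Module.finrank K y = i ∧ w ≤ y) then μ w * u y else 0)
        = if Module.finrank K y = i ∧ x ⊓ y = ⊥ then u y else 0 := by
      intro y
      by_cases hyi : Module.finrank K y = i
      · have e : ∀ w : Submodule K V,
            (if w ≤ x ∧ (Module.finrank K y = i ∧ w ≤ y) then μ w * u y else 0)
            = (if w ≤ x ⊓ y then μ w else 0) * u y := by
          intro w
          by_cases hc : w ≤ x ⊓ y
          · rw [if_pos hc, if_pos ⟨(le_inf_iff.mp hc).1, hyi, (le_inf_iff.mp hc).2⟩]
          · rw [if_neg hc, if_neg (by rw [le_inf_iff] at hc; tauto), zero_mul]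
        have hmob : (∑ w ∈ Finset.univ.filter
              (fun w : Submodule K V => w ≤ x ⊓ y), μ w)
            = if x ⊓ y = ⊥ then 1 else 0 := by
          simp only [hμ]
          exact aux_mobius _
        rw [Finset.sum_congr rfl fun w _ => e w, ← Finset.sum_mul, ← Finset.sum_filter, hmob]
        by_cases hb : x ⊓ y = ⊥
        · rw [if_pos hb, if_pos ⟨hyi, hb⟩, one_mul]
        · rw [if_neg hb, if_neg (by tauto), zero_mul]
      · rw [if_neg (by tauto)]
        exact Finset.sum_eq_zero fun w _ => if_neg (by tauto)
    calc ∑ y ∈ Finset.univ.filter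
          (fun y : Submodule K V => Module.finrank K y = i ∧ x ⊓ y = ⊥), u y
        = ∑ y : Submodule K V,
            if Module.finrank K y = i ∧ x ⊓ y = ⊥ then u y else 0 :=
          Finset.sum_filter _ _
      _ = ∑ y : Submodule K V, ∑ w : Submodule K V,
            (if w ≤ x ∧ (Module.finrank K y = i ∧ w ≤ y) then μ w * u y else 0) :=
          Finset.sum_congr rfl fun y _ => (step2 y).symm
      _ = ∑ w : Submodule K V, ∑ y : Submodule K V,
            (if w ≤ x ∧ (Module.finrank K y = i ∧ w ≤ y) then μ w * u y else 0) :=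
          Finset.sum_comm
      _ = ∑ w : Submodule K V, (if w ≤ x then μ w * T w else 0) :=
          Finset.sum_congr rfl fun w _ => (step1 w).symm
      _ = ∑ w ∈ Finset.univ.filter (fun w : Submodule K V => w ≤ x), μ w * T w :=
          (Finset.sum_filter _ _).symm
  -- Claim B : only the terms with dim w = i survive
  have claimB : ∑ w ∈ Finset.univ.filter (fun w : Submodule K V => w ≤ x), μ w * T w
      = μi * ∑ w ∈ Finset.univ.filter
          (fun w : Submodule K V => Module.finrank K w = i ∧ w ≤ x), u w := by
    have e : ∀ w ∈ Finset.univ.filter (fun w : Submodule K V => w ≤ x),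
        μ w * T w = if Module.finrank K w = i ∧ w ≤ x then μi * u w else 0 := by
      intro w hw
      simp only [Finset.mem_filter, Finset.mem_univ, true_and] at hw
      rcases lt_trichotomy (Module.finrank K w) i with hlt | heq | hgt
      · rw [hTzero w hlt, mul_zero, if_neg (fun hc => by omega)]
      · have efil : Finset.univ.filter
            (fun y : Submodule K V => Module.finrank K y = i ∧ w ≤ y) = {w} := by
          ext y
          simp only [Finset.mem_filter, Finset.mem_univ, true_and, Finset.mem_singleton]
          constructor
          · rintro ⟨hyi, hwy⟩
            exact (Submodule.eq_of_le_of_finrank_le hwy (by omega)).symm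
          · rintro rfl
            exact ⟨heq, le_rfl⟩
        have hTw : T w = u w := by
          simp only [hT]
          rw [efil, Finset.sum_singleton]
        rw [hTw, if_pos ⟨heq, hw⟩]
        simp only [hμ, hμi, heq]
      · have efil : Finset.univ.filter
            (fun y : Submodule K V => Module.finrank K y = i ∧ w ≤ y) = ∅ := by
          rw [Finset.filter_eq_empty_iff]
          rintro y - ⟨hyi, hwy⟩
          have := Submodule.finrank_mono hwy
          omega
        have hTw : T w = 0 := by
          simp only [hT]
          rw [efil, Finset.sum_empty]
        rw [hTw, mul_zero, if_neg (fun hc => by omega)]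
    rw [Finset.sum_congr rfl e, ← Finset.sum_filter]
    have efil2 : (Finset.univ.filter (fun w : Submodule K V => w ≤ x)).filter
        (fun w : Submodule K V => Module.finrank K w = i ∧ w ≤ x)
        = Finset.univ.filter
            (fun w : Submodule K V => Module.finrank K w = i ∧ w ≤ x) := by
      ext w
      simp only [Finset.filter_filter, Finset.mem_filter, Finset.mem_univ, true_and]
      tauto
    rw [efil2, ← Finset.mul_sum]
  rw [SL, SR, claimA, claimB]
  congr 1
  rcases le_or_gt i k with hik | hki
  · refine Finset.sum_congr ?_ fun _ _ => rfl
    ext y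
    simp only [Finset.mem_filter, Finset.mem_univ, true_and]
    have hm : min k i = i := min_eq_right hik
    constructor
    · rintro ⟨hyi, hyx⟩
      have hinf : x ⊓ y = y := inf_eq_right.mpr hyx
      refine ⟨hyi, ?_⟩
      rw [hinf, hyi, hm]
    · rintro ⟨hyi, hdim⟩
      rw [hm] at hdim
      have hinf : x ⊓ y = y :=
        Submodule.eq_of_le_of_finrank_le inf_le_right (by omega)
      exact ⟨hyi, inf_eq_right.mp hinf⟩
  · have hZ1 : Finset.univ.filter
        (fun w : Submodule K V => Module.finrank K w = i ∧ w ≤ x) = ∅ := by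
      rw [Finset.filter_eq_empty_iff]
      rintro w - ⟨hwi, hwx⟩
      have := Submodule.finrank_mono hwx
      omega
    have hm : min k i = k := min_eq_left (le_of_lt hki)
    have hZ2 : Finset.univ.filter (fun y : Submodule K V =>
          Module.finrank K y = i ∧ Module.finrank K ↥(x ⊓ y) = min k i)
        = Finset.univ.filter
            (fun y : Submodule K V => Module.finrank K y = i ∧ x ≤ y) := by
      ext y
      simp only [Finset.mem_filter, Finset.mem_univ, true_and]
      rw [hm]
      constructor
      · rintro ⟨hyi, hdim⟩
        have hinf : x ⊓ y = x :=
          Submodule.eq_of_le_of_finrank_le inf_le_left (by omega)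
        exact ⟨hyi, inf_eq_left.mp hinf⟩
      · rintro ⟨hyi, hxy⟩
        have hinf : x ⊓ y = x := inf_eq_left.mpr hxy
        rw [hinf, hxk]
        exact ⟨hyi, rfl⟩
    rw [hZ1, Finset.sum_empty, hZ2]
    have := hTzero x (by omega)
    simp only [hT] at this
    exact this.symm
end

section
/- Let 1 ≤ ℓ < k ≤ n, let F ⊆ L_k(V) and G ⊆ L_ℓ(V) be nonempty cross-intersecting families with characteristic vectors φ, ψ ∈ ℝ^{L(V)}, and set X = (φ/‖φ‖ + ψ/‖ψ‖)(φ/‖φ‖ + ψ/‖ψ‖)ᵀ. Then X is symmetric positive semidefinite with all entries nonnegative, I_k • X = I_ℓ • X = 1, (W̄_{k,ℓ} + W̄_{ℓ,k}) • X = 0, and ½(J_{k,ℓ} + J_{ℓ,k}) • X = |F|^{1/2} |G|^{1/2}. -/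
/-!
The vector `w = φ/‖φ‖ + ψ/‖ψ‖` restricts to `φ/‖φ‖` on the layer `L_k(V)` and to `ψ/‖ψ‖` on
`L_ℓ(V)`, because `F` and `G` live in these disjoint layers; in particular `φ ⊥ ψ`. Since
`X = w wᵀ` has rank one, `I_k • X = ⟨w, φ/‖φ‖⟩ = 1` and
`J_{k,ℓ} • X = ⟨1_{L_k(V)}, w⟩ ⟨1_{L_ℓ(V)}, w⟩ = |F|^{1/2} |G|^{1/2}`, while `W̄_{k,ℓ} • X`
vanishes because on its support `X_{x,y} = φ_x ψ_y / (‖φ‖ ‖ψ‖)` and `F`, `G` are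
cross-intersecting.
-/

open Matrix

/-- The all-ones matrix `J` on `L(V) × L(V)`. -/
noncomputable def Jmat (K V : Type*) [Field K] [AddCommGroup V] [Module K V] :
    Matrix (Submodule K V) (Submodule K V) ℝ :=
  Matrix.of fun _ _ => 1

/-- `J_{k,ℓ} := I_k J I_ℓ`, where `I_k := W_{k,k}`. -/
noncomputable def JJmat (K V : Type*) [Field K] [AddCommGroup V] [Module K V]
    [Fintype (Submodule K V)] (k l : ℤ) : Matrix (Submodule K V) (Submodule K V) ℝ :=
  Wmat K V k k * Jmat K V * Wmat K V l l

/-- The Frobenius pairing `Y • Z = trace (Yᵀ Z)`. -/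
noncomputable def mdot {ι : Type*} [Fintype ι] (Y Z : Matrix ι ι ℝ) : ℝ :=
  (Yᵀ * Z).trace

open Finset

section Frobenius

variable {ι : Type*} [Fintype ι]

lemma mdot_eq_sum (Y Z : Matrix ι ι ℝ) : mdot Y Z = ∑ i, ∑ j, Y i j * Z i j := by
  simp only [mdot, trace, Matrix.diag, mul_apply, transpose_apply]
  exact sum_comm

lemma mdot_eq_zero_of_forall_ne_zero {Y Z : Matrix ι ι ℝ} (h : ∀ i j, Y i j ≠ 0 → Z i j = 0) :
    mdot Y Z = 0 := by
  rw [mdot_eq_sum]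
  refine sum_eq_zero fun i _ => sum_eq_zero fun j _ => ?_
  by_cases hY : Y i j = 0
  · rw [hY, zero_mul]
  · rw [h i j hY, mul_zero]

lemma mdot_add_left (Y₁ Y₂ Z : Matrix ι ι ℝ) : mdot (Y₁ + Y₂) Z = mdot Y₁ Z + mdot Y₂ Z := by
  simp only [mdot, transpose_add, Matrix.add_mul, trace_add]

lemma mdot_smul_left (c : ℝ) (Y Z : Matrix ι ι ℝ) : mdot (c • Y) Z = c * mdot Y Z := by
  simp only [mdot, transpose_smul, Matrix.smul_mul, trace_smul, smul_eq_mul]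

lemma mdot_vecMulVec (Y : Matrix ι ι ℝ) (u v : ι → ℝ) :
    mdot Y (vecMulVec u v) = u ⬝ᵥ (Y *ᵥ v) := by
  rw [mdot, mul_vecMulVec, trace_vecMulVec, mulVec_transpose, dotProduct_mulVec]

lemma mdot_vecMulVec_vecMulVec (a b u v : ι → ℝ) :
    mdot (vecMulVec a b) (vecMulVec u v) = (a ⬝ᵥ u) * (b ⬝ᵥ v) := by
  rw [mdot_vecMulVec, vecMulVec_mulVec, op_smul_eq_smul, dotProduct_smul, smul_eq_mul, mul_comm,
    dotProduct_comm u]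

lemma mdot_diagonal_vecMulVec [DecidableEq ι] (d u v : ι → ℝ) :
    mdot (diagonal d) (vecMulVec u v) = u ⬝ᵥ (d * v) := by
  rw [mdot_vecMulVec]
  exact congrArg _ (funext (mulVec_diagonal d v))

end Frobenius

section CharVec

variable {ι : Type*} [DecidableEq ι]

def charVec (s : Finset ι) : ι → ℝ := fun x => if x ∈ s then 1 else 0

lemma charVec_nonneg (s : Finset ι) (x : ι) : 0 ≤ charVec s x := by
  unfold charVec
  split_ifs <;> norm_num

@[simp]
lemma charVec_empty : charVec (∅ : Finset ι) = 0 := by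
  ext x
  simp [charVec]

lemma charVec_mul_charVec (s t : Finset ι) : charVec s * charVec t = charVec (s ∩ t) := by
  ext x
  by_cases hs : x ∈ s <;> by_cases ht : x ∈ t <;> simp [charVec, hs, ht]

variable [Fintype ι]

noncomputable def unitCharVec (s : Finset ι) : ι → ℝ :=
  (√(charVec s ⬝ᵥ charVec s))⁻¹ • charVec s

lemma sum_charVec (s : Finset ι) : ∑ x, charVec s x = #s := by
  simp [charVec]

lemma charVec_dotProduct_charVec (s t : Finset ι) : charVec s ⬝ᵥ charVec t = #(s ∩ t) := by
  rw [← sum_charVec, ← charVec_mul_charVec]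
  rfl

lemma unitCharVec_eq (s : Finset ι) : unitCharVec s = (√(#s : ℝ))⁻¹ • charVec s := by
  rw [unitCharVec, charVec_dotProduct_charVec, inter_self]

lemma unitCharVec_nonneg (s : Finset ι) (x : ι) : 0 ≤ unitCharVec s x := by
  rw [unitCharVec_eq]
  exact mul_nonneg (by positivity) (charVec_nonneg s x)

lemma unitCharVec_apply_of_notMem {s : Finset ι} {x : ι} (hx : x ∉ s) : unitCharVec s x = 0 := by
  simp [unitCharVec_eq, charVec, hx]

lemma sum_unitCharVec (s : Finset ι) : ∑ x, unitCharVec s x = √(#s : ℝ) := by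
  simp only [unitCharVec_eq, Pi.smul_apply, smul_eq_mul, ← mul_sum, sum_charVec]
  rw [inv_mul_eq_div, Real.div_sqrt]

lemma unitCharVec_dotProduct_unitCharVec (s t : Finset ι) :
    unitCharVec s ⬝ᵥ unitCharVec t = (√(#s : ℝ))⁻¹ * (√(#t : ℝ))⁻¹ * #(s ∩ t) := by
  simp only [unitCharVec_eq, smul_dotProduct, dotProduct_smul, charVec_dotProduct_charVec,
    smul_eq_mul]
  ring

lemma unitCharVec_dotProduct_self {s : Finset ι} (hs : s.Nonempty) :
    unitCharVec s ⬝ᵥ unitCharVec s = 1 := by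
  have : (0 : ℝ) < #s := by exact_mod_cast hs.card_pos
  rw [unitCharVec_dotProduct_unitCharVec, inter_self, ← mul_inv, Real.mul_self_sqrt this.le,
    inv_mul_cancel₀ this.ne']

lemma unitCharVec_dotProduct_of_disjoint {s t : Finset ι} (h : Disjoint s t) :
    unitCharVec s ⬝ᵥ unitCharVec t = 0 := by
  rw [unitCharVec_dotProduct_unitCharVec, disjoint_iff_inter_eq_empty.1 h, card_empty,
    Nat.cast_zero, mul_zero]

lemma charVec_mul_unitCharVec (S s : Finset ι) :
    charVec S * unitCharVec s = (√(#s : ℝ))⁻¹ • charVec (S ∩ s) := by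
  rw [unitCharVec_eq, mul_smul_comm, charVec_mul_charVec]

section TwoFamilies

variable {S T s t : Finset ι}

lemma charVec_mul_add_unitCharVec (hs : s ⊆ S) (ht : Disjoint S t) :
    charVec S * (unitCharVec s + unitCharVec t) = unitCharVec s := by
  rw [mul_add, charVec_mul_unitCharVec, charVec_mul_unitCharVec, inter_eq_right.2 hs,
    disjoint_iff_inter_eq_empty.1 ht, ← unitCharVec_eq, charVec_empty, smul_zero, add_zero]

lemma add_unitCharVec_apply_of_mem (hs : s ⊆ S) (ht : Disjoint S t) {x : ι} (hx : x ∈ S) :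
    (unitCharVec s + unitCharVec t) x = unitCharVec s x := by
  simpa [charVec, hx] using congrFun (charVec_mul_add_unitCharVec hs ht) x

lemma charVec_dotProduct_add_unitCharVec (hs : s ⊆ S) (ht : Disjoint S t) :
    charVec S ⬝ᵥ (unitCharVec s + unitCharVec t) = √(#s : ℝ) := by
  rw [← sum_unitCharVec s]
  exact congrArg (fun f : ι → ℝ => ∑ x, f x) (charVec_mul_add_unitCharVec hs ht)

lemma add_unitCharVec_mul_apply_eq_zero (hs : s ⊆ S) (ht : t ⊆ T) (hST : Disjoint S T)
    {x y : ι} (hx : x ∈ S) (hy : y ∈ T) (hxy : x ∈ s → y ∉ t) :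
    (unitCharVec s + unitCharVec t) x * (unitCharVec s + unitCharVec t) y = 0 := by
  rw [add_unitCharVec_apply_of_mem hs (hST.mono_right ht) hx, add_comm,
    add_unitCharVec_apply_of_mem ht (hST.symm.mono_right hs) hy]
  by_cases hxs : x ∈ s
  · rw [unitCharVec_apply_of_notMem (hxy hxs), mul_zero]
  · rw [unitCharVec_apply_of_notMem hxs, zero_mul]

end TwoFamilies

end CharVec

section Layers

variable (K V : Type*) [Field K] [AddCommGroup V] [Module K V]

lemma Jmat_eq_vecMulVec : Jmat K V = vecMulVec 1 1 := by
  ext x y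
  simp [Jmat, vecMulVec_apply]

variable [Fintype (Submodule K V)]

noncomputable def rankLayer (a : ℤ) : Finset (Submodule K V) := {x | (Module.finrank K x : ℤ) = a}

variable {K V}

@[simp]
lemma mem_rankLayer {a : ℤ} {x : Submodule K V} :
    x ∈ rankLayer K V a ↔ (Module.finrank K x : ℤ) = a := by
  simp [rankLayer]

lemma disjoint_rankLayer {a b : ℤ} (h : a ≠ b) : Disjoint (rankLayer K V a) (rankLayer K V b) :=
  disjoint_filter.2 fun _ _ ha hb => h (ha.symm.trans hb)

lemma mdot_Wbarmat_eq_zero {a b : ℤ} {Z : Matrix (Submodule K V) (Submodule K V) ℝ}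
    (h : ∀ x y : Submodule K V, (Module.finrank K x : ℤ) = a → (Module.finrank K y : ℤ) = b →
      x ⊓ y = ⊥ → Z x y = 0) :
    mdot (Wbarmat K V a b) Z = 0 := by
  refine mdot_eq_zero_of_forall_ne_zero fun x y hxy => ?_
  simp only [Wbarmat, of_apply, ne_eq, ite_eq_right_iff, one_ne_zero, imp_false, not_not] at hxy
  exact h x y hxy.1 hxy.2.1 hxy.2.2

lemma mdot_Wbarmat_add_Wbarmat_vecMulVec_self {a b : ℤ} {w : Submodule K V → ℝ}
    (h : ∀ x y : Submodule K V, (Module.finrank K x : ℤ) = a → (Module.finrank K y : ℤ) = b →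
      x ⊓ y = ⊥ → w x * w y = 0) :
    mdot (Wbarmat K V a b + Wbarmat K V b a) (vecMulVec w w) = 0 := by
  rw [mdot_add_left, mdot_Wbarmat_eq_zero (Z := vecMulVec w w) h, zero_add]
  refine mdot_Wbarmat_eq_zero fun x y hx hy hxy => ?_
  rw [vecMulVec_apply, mul_comm]
  exact h y x hy hx (by rwa [inf_comm])

variable [FiniteDimensional K V] [DecidableEq (Submodule K V)]

lemma Wmat_self_eq_diagonal (a : ℤ) : Wmat K V a a = diagonal (charVec (rankLayer K V a)) := by
  ext x y
  have key : (Module.finrank K x : ℤ) = a ∧ (Module.finrank K y : ℤ) = a ∧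
      (Module.finrank K ↥(x ⊓ y) : ℤ) = min a a ↔ x = y ∧ (Module.finrank K x : ℤ) = a := by
    rw [min_self]
    constructor
    · rintro ⟨hx, hy, hxy⟩
      have hx' : x ⊓ y = x := Submodule.eq_of_le_of_finrank_eq inf_le_left (by omega)
      have hy' : x ⊓ y = y := Submodule.eq_of_le_of_finrank_eq inf_le_right (by omega)
      exact ⟨hx'.symm.trans hy', hx⟩
    · rintro ⟨rfl, hx⟩
      rw [inf_idem]
      exact ⟨hx, hx, hx⟩
  rw [Wmat, of_apply, if_congr key rfl rfl, diagonal_apply]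
  rcases eq_or_ne x y with rfl | hxy
  · simp [charVec]
  · simp [hxy]

lemma JJmat_eq_vecMulVec (a b : ℤ) :
    JJmat K V a b = vecMulVec (charVec (rankLayer K V a)) (charVec (rankLayer K V b)) := by
  rw [JJmat, Wmat_self_eq_diagonal, Wmat_self_eq_diagonal, Jmat_eq_vecMulVec, mul_vecMulVec,
    vecMulVec_mul]
  congr 1 <;> ext x <;> simp [mulVec_diagonal, vecMul_diagonal]

end Layers

open Classical in
theorem primal_feasible_general
    {K V : Type*} [Field K] [AddCommGroup V] [Module K V] [FiniteDimensional K V]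
    [Fintype (Submodule K V)]
    (k l : ℕ)
    (hlk : l < k)
    (F G : Finset (Submodule K V)) (hFne : F.Nonempty) (hGne : G.Nonempty)
    (hF : ∀ x ∈ F, Module.finrank K x = k)
    (hG : ∀ y ∈ G, Module.finrank K y = l)
    (hcross : ∀ x ∈ F, ∀ y ∈ G, x ⊓ y ≠ ⊥) :
    let φ : Submodule K V → ℝ := fun x => if x ∈ F then 1 else 0
    let ψ : Submodule K V → ℝ := fun y => if y ∈ G then 1 else 0
    let w : Submodule K V → ℝ :=
      (Real.sqrt (φ ⬝ᵥ φ))⁻¹ • φ + (Real.sqrt (ψ ⬝ᵥ ψ))⁻¹ • ψ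
    let X : Matrix (Submodule K V) (Submodule K V) ℝ := Matrix.vecMulVec w w
    X.PosSemidef ∧ (∀ x y, 0 ≤ X x y) ∧
      mdot (Wmat K V k k) X = 1 ∧ mdot (Wmat K V l l) X = 1 ∧
      mdot (Wbarmat K V k l + Wbarmat K V l k) X = 0 ∧
      mdot ((1 / 2 : ℝ) • (JJmat K V k l + JJmat K V l k)) X =
        Real.sqrt F.card * Real.sqrt G.card := by
  intro φ ψ w X
  have hX : X = vecMulVec w w := rfl
  have hw : w = unitCharVec F + unitCharVec G := rfl
  clear_value φ ψ w X
  subst hX hw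
  set L := rankLayer K V
  have hFk : F ⊆ L k := fun x hx => mem_rankLayer.2 (by rw [hF x hx])
  have hGl : G ⊆ L l := fun y hy => mem_rankLayer.2 (by rw [hG y hy])
  have hkl : Disjoint (L k) (L l) := disjoint_rankLayer (by omega)
  have hFG : Disjoint F G := hkl.mono hFk hGl
  have hkG : Disjoint (L k) G := hkl.mono_right hGl
  have hlF : Disjoint (L l) F := hkl.symm.mono_right hFk
  refine ⟨by simpa using posSemidef_vecMulVec_self_star (unitCharVec F + unitCharVec G),
    fun x y => mul_nonneg (add_nonneg (unitCharVec_nonneg F x) (unitCharVec_nonneg G x))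
      (add_nonneg (unitCharVec_nonneg F y) (unitCharVec_nonneg G y)), ?_, ?_, ?_, ?_⟩
  · rw [Wmat_self_eq_diagonal, mdot_diagonal_vecMulVec, charVec_mul_add_unitCharVec hFk hkG,
      add_dotProduct, unitCharVec_dotProduct_self hFne,
      unitCharVec_dotProduct_of_disjoint hFG.symm, add_zero]
  · rw [Wmat_self_eq_diagonal, mdot_diagonal_vecMulVec, add_comm (unitCharVec F),
      charVec_mul_add_unitCharVec hGl hlF, add_dotProduct, unitCharVec_dotProduct_self hGne,
      unitCharVec_dotProduct_of_disjoint hFG, add_zero]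
  · exact mdot_Wbarmat_add_Wbarmat_vecMulVec_self fun x y hx hy hxy =>
      add_unitCharVec_mul_apply_eq_zero hFk hGl hkl (mem_rankLayer.2 hx) (mem_rankLayer.2 hy)
        fun hxF hyG => hcross x hxF y hyG hxy
  · rw [mdot_smul_left, mdot_add_left, JJmat_eq_vecMulVec, JJmat_eq_vecMulVec,
      mdot_vecMulVec_vecMulVec, mdot_vecMulVec_vecMulVec,
      charVec_dotProduct_add_unitCharVec hFk hkG, add_comm (unitCharVec F),
      charVec_dotProduct_add_unitCharVec hGl hlF]
    ring

open Classical in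
/-- **The primal feasible solution.** For nonempty cross-intersecting families `F`, `G`
with characteristic vectors `φ`, `ψ`, the rank-one matrix
`X = (φ/‖φ‖ + ψ/‖ψ‖)(φ/‖φ‖ + ψ/‖ψ‖)ᵀ` is symmetric PSD with nonnegative entries, satisfies
`I_k • X = I_ℓ • X = 1`, `(W̄_{k,ℓ} + W̄_{ℓ,k}) • X = 0`, and
`½(J_{k,ℓ} + J_{ℓ,k}) • X = |F|^{1/2} |G|^{1/2}`. -/
theorem primal_feasible
    {K V : Type*} [Field K] [Fintype K] [AddCommGroup V] [Module K V] [FiniteDimensional K V]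
    [Fintype (Submodule K V)]
    (n k l : ℕ) (hV : Module.finrank K V = n)
    (hl1 : 1 ≤ l) (hlk : l < k) (hkn : k ≤ n)
    (F G : Finset (Submodule K V)) (hFne : F.Nonempty) (hGne : G.Nonempty)
    (hF : ∀ x ∈ F, Module.finrank K x = k)
    (hG : ∀ y ∈ G, Module.finrank K y = l)
    (hcross : ∀ x ∈ F, ∀ y ∈ G, x ⊓ y ≠ ⊥) :
    let φ : Submodule K V → ℝ := fun x => if x ∈ F then 1 else 0
    let ψ : Submodule K V → ℝ := fun y => if y ∈ G then 1 else 0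
    let w : Submodule K V → ℝ :=
      (Real.sqrt (φ ⬝ᵥ φ))⁻¹ • φ + (Real.sqrt (ψ ⬝ᵥ ψ))⁻¹ • ψ
    let X : Matrix (Submodule K V) (Submodule K V) ℝ := Matrix.vecMulVec w w
    X.PosSemidef ∧ (∀ x y, 0 ≤ X x y) ∧
      mdot (Wmat K V k k) X = 1 ∧ mdot (Wmat K V l l) X = 1 ∧
      mdot (Wbarmat K V k l + Wbarmat K V l k) X = 0 ∧
      mdot ((1 / 2 : ℝ) • (JJmat K V k l + JJmat K V l k)) X =
        Real.sqrt F.card * Real.sqrt G.card :=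
  primal_feasible_general k l hlk F G hFne hGne hF hG hcross
end

section
/- Let 1 ≤ ℓ < k ≤ n/2. For i = 0,…,k one has |θ_i^{k,k} a(0)| = ½ q^{binom(i,2)+ℓ−ik} ((q^{k−ℓ}−1)/(q^k−1)) [n−k−i choose k−i]_q [n−k choose k]_q^{−1} [n−1 choose k−1]_q^{1/2} [n−1 choose ℓ−1]_q^{1/2}; moreover |θ_i^{k,k} a(0)| < ½ [n−1 choose k−1]_q^{1/2} [n−1 choose ℓ−1]_q^{1/2} for i = 0, 1, and |θ_i^{k,k} a(0)| < (1/(2q)) [n−1 choose k−1]_q^{1/2} [n−1 choose ℓ−1]_q^{1/2} for i = 2,…,k. -/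
/-- The eigenvalue
`θ_i^{k,ℓ} = (-1)^i q^{C(i,2) + kℓ - i(k+ℓ)/2} [n-k-i choose ℓ-i] [n-2i choose k-i]^{1/2}
[n-2i choose ℓ-i]^{-1/2}` for `i ≤ k ≤ n - i`, and `0` if `k < i` or `k > n - i`.
(The half-integer power of `q` is expressed via `√q`.) -/
noncomputable def theta (q : ℝ) (n i k l : ℕ) : ℝ :=
  if i ≤ k ∧ k ≤ n - i then
    (-1) ^ i * (Real.sqrt q) ^ ((i * (i - 1) : ℤ) + 2 * k * l - i * (k + l)) *
      gbinom q ((n : ℤ) - k - i) ((l : ℤ) - i) *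
      Real.sqrt (gbinom q ((n : ℤ) - 2 * i) ((k : ℤ) - i)) *
      (Real.sqrt (gbinom q ((n : ℤ) - 2 * i) ((l : ℤ) - i)))⁻¹
  else 0

/-- `a(λ)`, defined by
`q^{k²}(q^k-1)[n-k choose k] a(λ) = ½ q^ℓ (q^{k-ℓ}-1)[n-1 choose k-1]^{1/2}[n-1 choose ℓ-1]^{1/2}
+ q^{ℓ²}(q^ℓ-1)[n-ℓ choose ℓ] λ`. -/
noncomputable def aF (q : ℝ) (n k l : ℕ) (lam : ℝ) : ℝ :=
  ((1 / 2) * q ^ l * (q ^ ((k : ℤ) - l) - 1) *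
      Real.sqrt (gbinom q ((n : ℤ) - 1) ((k : ℤ) - 1)) *
      Real.sqrt (gbinom q ((n : ℤ) - 1) ((l : ℤ) - 1)) +
    q ^ (l ^ 2) * (q ^ l - 1) * gbinom q ((n : ℤ) - l) l * lam) /
  (q ^ (k ^ 2) * (q ^ k - 1) * gbinom q ((n : ℤ) - k) k)

/-! On the diagonal the two square-root factors of `θ_i^{k,k}` cancel and the power of `√q`
is even, so `θ_i^{k,k} = (-1)^i q^{C(i,2)+k²-ik} [n-k-i choose k-i]`, and multiplying by `a(0)`
gives the closed form. For the bounds, `q^ℓ (q^{k-ℓ} - 1) < q^k - 1`, and `[n-k-i choose k-i]`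
increases to `[n-k choose k]` as `i` decreases, since each step multiplies by some
`(q^a-1)/(q^b-1) ≥ 1` with `b ≤ a`; what remains is `q^{C(i,2)-ik}`, which is `1` for `i = 0`
and at most `q⁻¹` for `1 ≤ i ≤ k`. -/

lemma gbinom_pos {q : ℝ} (hq : 1 < q) {a b : ℤ} (hb : 0 ≤ b) (hba : b ≤ a) :
    0 < gbinom q a b := by
  rw [gbinom, if_pos ⟨hb.trans hba, hb⟩]
  refine Finset.prod_pos fun i hi => ?_
  rw [Finset.mem_range] at hi
  apply div_pos <;> exact sub_pos.2 (one_lt_zpow₀ hq (by omega))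

lemma gbinom_eq_div_mul {q : ℝ} {a b : ℤ} (ha : 1 ≤ a) (hb : 1 ≤ b) :
    gbinom q a b = (q ^ a - 1) / (q ^ b - 1) * gbinom q (a - 1) (b - 1) := by
  rw [gbinom, gbinom, if_pos ⟨by omega, by omega⟩, if_pos ⟨by omega, by omega⟩,
    show b.toNat = (b - 1).toNat + 1 by omega, Finset.prod_range_succ', mul_comm]
  congr 1
  · norm_num
  · simp only [Nat.cast_succ, sub_add_eq_sub_sub_swap]

lemma gbinom_sub_one_le {q : ℝ} (hq : 1 < q) {a b : ℤ} (hb : 1 ≤ b) (hba : b ≤ a) :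
    gbinom q (a - 1) (b - 1) ≤ gbinom q a b := by
  rw [gbinom_eq_div_mul (hb.trans hba) hb]
  refine le_mul_of_one_le_left (gbinom_pos hq (by omega) (by omega)).le ?_
  rw [one_le_div (sub_pos.2 (one_lt_zpow₀ hq (by omega)))]
  linarith [zpow_le_zpow_right₀ hq.le hba]

lemma gbinom_sub_le {q : ℝ} (hq : 1 < q) {a b : ℤ} (hba : b ≤ a) :
    ∀ i : ℕ, (i : ℤ) ≤ b → gbinom q (a - i) (b - i) ≤ gbinom q a b
  | 0, _ => by simp
  | i + 1, hib => by
    have h := gbinom_sub_one_le hq (a := a - i) (b := b - i) (by omega) (by omega)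
    push_cast [← sub_sub]
    exact h.trans (gbinom_sub_le hq hba i (by omega))

lemma two_mul_choose_two (i : ℕ) : 2 * (i.choose 2 : ℤ) = i * (i - 1) := by
  have h : 2 * i.choose 2 = i * (i - 1) := by
    rw [Nat.choose_two_right, Nat.mul_div_cancel' (Nat.even_mul_pred_self i).two_dvd]
  rcases i with _ | i
  · simp
  · simpa using congrArg (Nat.cast : ℕ → ℤ) h

lemma choose_two_sub_mul_le_neg_one {i k : ℕ} (hi : 1 ≤ i) (hik : i ≤ k) :
    (i.choose 2 : ℤ) - i * k ≤ -1 := by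
  have h := two_mul_choose_two i
  have : (i : ℤ) * (i - 1) ≤ i * (k - 1) := by gcongr
  nlinarith

lemma theta_diag {q : ℝ} (hq : 1 < q) {n i k : ℕ} (hik : i ≤ k) (hkn : k + i ≤ n) :
    theta q n i k k =
      (-1) ^ i * q ^ ((i.choose 2 : ℤ) + k * k - i * k) *
        gbinom q ((n : ℤ) - k - i) ((k : ℤ) - i) := by
  have hC : Real.sqrt (gbinom q ((n : ℤ) - 2 * i) ((k : ℤ) - i)) ≠ 0 :=
    (Real.sqrt_pos.2 (gbinom_pos hq (by omega) (by omega))).ne'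
  have hexp : ((i * (i - 1) : ℤ) + 2 * k * k - i * (k + k)) =
      2 * ((i.choose 2 : ℤ) + k * k - i * k) := by
    linear_combination -two_mul_choose_two i
  rw [theta, if_pos ⟨hik, by omega⟩, hexp, zpow_mul, zpow_two, Real.mul_self_sqrt (by linarith),
    mul_assoc _ _ (Real.sqrt _)⁻¹, mul_inv_cancel₀ hC, mul_one]

lemma abs_theta_mul_aF_zero {q : ℝ} (hq : 1 < q) {n k l i : ℕ} (hk : 0 < k) (hlk : l ≤ k)
    (hkn : 2 * k ≤ n) (hik : i ≤ k) :
    |theta q n i k k * aF q n k l 0| =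
      (1 / 2) * q ^ ((i.choose 2 : ℤ) + l - i * k) * ((q ^ ((k : ℤ) - l) - 1) / (q ^ k - 1)) *
        gbinom q ((n : ℤ) - k - i) ((k : ℤ) - i) * (gbinom q ((n : ℤ) - k) k)⁻¹ *
        Real.sqrt (gbinom q ((n : ℤ) - 1) ((k : ℤ) - 1)) *
        Real.sqrt (gbinom q ((n : ℤ) - 1) ((l : ℤ) - 1)) := by
  have hq0 : 0 < q := by linarith
  have hA := gbinom_pos hq (a := (n : ℤ) - k - i) (b := (k : ℤ) - i) (by omega) (by omega)
  have hG := gbinom_pos hq (a := (n : ℤ) - k) (b := k) (by omega) (by omega)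
  have hqk : 0 < q ^ k - 1 := sub_pos.2 (one_lt_pow₀ hq hk.ne')
  have hqkl : 0 ≤ q ^ ((k : ℤ) - l) - 1 := sub_nonneg.2 (one_le_zpow₀ hq.le (by omega))
  have hpow : q ^ ((i.choose 2 : ℤ) + k * k - i * k) * q ^ l =
      q ^ ((i.choose 2 : ℤ) + l - i * k) * q ^ (k ^ 2) := by
    rw [← zpow_natCast q l, ← zpow_natCast q (k ^ 2), ← zpow_add₀ hq0.ne',
      ← zpow_add₀ hq0.ne']
    push_cast
    ring_nf
  rw [theta_diag hq hik (by omega), aF, mul_zero, add_zero, mul_assoc ((-1) ^ i : ℝ),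
    mul_assoc ((-1) ^ i : ℝ), abs_mul, abs_neg_one_pow, one_mul, abs_of_nonneg (by positivity)]
  field_simp
  linear_combination (q ^ ((k : ℤ) - l) - 1) *
    Real.sqrt (gbinom q ((n : ℤ) - 1) ((k : ℤ) - 1)) *
    Real.sqrt (gbinom q ((n : ℤ) - 1) ((l : ℤ) - 1)) * hpow

lemma zpow_add_mul_zpow_sub_one_div_lt {q : ℝ} (hq : 1 < q) (e : ℤ) {k l : ℕ} (hl : 0 < l)
    (hlk : l ≤ k) :
    q ^ (e + l) * ((q ^ ((k : ℤ) - l) - 1) / (q ^ k - 1)) < q ^ e := by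
  have hq0 : q ≠ 0 := by positivity
  have hql : 1 < q ^ l := one_lt_pow₀ hq hl.ne'
  have h : q ^ (e + l) * (q ^ ((k : ℤ) - l) - 1) = q ^ e * (q ^ k - q ^ l) := by
    rw [zpow_add₀ hq0, zpow_sub₀ hq0, zpow_natCast, zpow_natCast]
    field_simp
  rw [mul_div_assoc', div_lt_iff₀ (sub_pos.2 (hql.trans_le (pow_le_pow_right₀ hq.le hlk))), h]
  exact mul_lt_mul_of_pos_left (by linarith) (zpow_pos (by positivity) e)

lemma abs_theta_mul_aF_zero_lt {q : ℝ} (hq : 1 < q) {n k l i : ℕ} (hl : 0 < l) (hlk : l ≤ k)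
    (hkn : 2 * k ≤ n) (hik : i ≤ k) :
    |theta q n i k k * aF q n k l 0| <
      (1 / 2) * q ^ ((i.choose 2 : ℤ) - i * k) *
        Real.sqrt (gbinom q ((n : ℤ) - 1) ((k : ℤ) - 1)) *
        Real.sqrt (gbinom q ((n : ℤ) - 1) ((l : ℤ) - 1)) := by
  rw [abs_theta_mul_aF_zero hq (by omega) hlk hkn hik,
    show (i.choose 2 : ℤ) + l - i * k = ((i.choose 2 : ℤ) - i * k) + l by ring]
  set e : ℤ := (i.choose 2 : ℤ) - i * k
  set A := gbinom q ((n : ℤ) - k - i) ((k : ℤ) - i)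
  set G := gbinom q ((n : ℤ) - k) k
  set X := (q ^ ((k : ℤ) - l) - 1) / (q ^ k - 1)
  set sk := Real.sqrt (gbinom q ((n : ℤ) - 1) ((k : ℤ) - 1))
  set sl := Real.sqrt (gbinom q ((n : ℤ) - 1) ((l : ℤ) - 1))
  have hG : 0 < G := gbinom_pos hq (by omega) (by omega)
  have hAG : A * G⁻¹ ≤ 1 := by
    rw [← div_eq_mul_inv, div_le_one hG]
    exact gbinom_sub_le hq (by omega) i (by omega)
  have hX : 0 ≤ X :=
    div_nonneg (sub_nonneg.2 (one_le_zpow₀ hq.le (by omega))) (sub_nonneg.2 (one_le_pow₀ hq.le))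
  have hsk : 0 < sk := Real.sqrt_pos.2 (gbinom_pos hq (by omega) (by omega))
  have hsl : 0 < sl := Real.sqrt_pos.2 (gbinom_pos hq (by omega) (by omega))
  have key : q ^ (e + l) * X * (A * G⁻¹) < q ^ e :=
    (mul_le_of_le_one_right (by positivity) hAG).trans_lt
      (zpow_add_mul_zpow_sub_one_div_lt hq e hl hlk)
  calc (1 / 2) * q ^ (e + l) * X * A * G⁻¹ * sk * sl
      = (1 / 2 * sk * sl) * (q ^ (e + l) * X * (A * G⁻¹)) := by ring
    _ < (1 / 2 * sk * sl) * q ^ e := mul_lt_mul_of_pos_left key (by positivity)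
    _ = (1 / 2) * q ^ e * sk * sl := by ring

/-- **Evaluation of `|θ_i^{k,k} a(0)|` (display (5) of the paper).** For `1 ≤ ℓ < k ≤ n/2`
and `0 ≤ i ≤ k`:
`|θ_i^{k,k} a(0)| = ½ q^{C(i,2)+ℓ-ik} ((q^{k-ℓ}-1)/(q^k-1)) [n-k-i choose k-i][n-k choose k]⁻¹
 [n-1 choose k-1]^{1/2}[n-1 choose ℓ-1]^{1/2}`,
and this is `< ½ [n-1 choose k-1]^{1/2}[n-1 choose ℓ-1]^{1/2}` for `i = 0, 1` and
`< (1/2q) [n-1 choose k-1]^{1/2}[n-1 choose ℓ-1]^{1/2}` for `i = 2, …, k`. -/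
theorem abs_theta_mul_a_zero
    (q n k l : ℕ) (hq : IsPrimePow q)
    (hl1 : 1 ≤ l) (hlk : l < k) (hkn : 2 * k ≤ n) :
    (∀ i : ℕ, i ≤ k →
      |theta (q : ℝ) n i k k * aF (q : ℝ) n k l 0| =
        (1 / 2) * (q : ℝ) ^ ((i.choose 2 : ℤ) + (l : ℤ) - i * k) *
          (((q : ℝ) ^ ((k : ℤ) - l) - 1) / ((q : ℝ) ^ (k : ℕ) - 1)) *
          gbinom (q : ℝ) ((n : ℤ) - k - i) ((k : ℤ) - i) *
          (gbinom (q : ℝ) ((n : ℤ) - k) (k : ℤ))⁻¹ *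
          Real.sqrt (gbinom (q : ℝ) ((n : ℤ) - 1) ((k : ℤ) - 1)) *
          Real.sqrt (gbinom (q : ℝ) ((n : ℤ) - 1) ((l : ℤ) - 1))) ∧
    (∀ i : ℕ, i ≤ 1 →
      |theta (q : ℝ) n i k k * aF (q : ℝ) n k l 0| <
        (1 / 2) * Real.sqrt (gbinom (q : ℝ) ((n : ℤ) - 1) ((k : ℤ) - 1)) *
          Real.sqrt (gbinom (q : ℝ) ((n : ℤ) - 1) ((l : ℤ) - 1))) ∧
    (∀ i : ℕ, 2 ≤ i → i ≤ k →
      |theta (q : ℝ) n i k k * aF (q : ℝ) n k l 0| <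
        (1 / (2 * q)) * Real.sqrt (gbinom (q : ℝ) ((n : ℤ) - 1) ((k : ℤ) - 1)) *
          Real.sqrt (gbinom (q : ℝ) ((n : ℤ) - 1) ((l : ℤ) - 1))) := by
  have hq1 : (1 : ℝ) < q := by exact_mod_cast hq.one_lt
  refine ⟨fun i hik => abs_theta_mul_aF_zero hq1 (by omega) hlk.le hkn hik, fun i hi => ?_,
    fun i hi hik => ?_⟩
  · have he : (i.choose 2 : ℤ) - i * k ≤ 0 := by
      rw [Nat.choose_eq_zero_of_lt (by omega)]
      push_cast
      nlinarith
    calc _ < _ := abs_theta_mul_aF_zero_lt hq1 hl1 hlk.le hkn (by omega)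
      _ ≤ (1 / 2) * 1 * _ * _ := by gcongr; exact zpow_le_one_of_nonpos₀ hq1.le he
      _ = _ := by ring
  · have he := choose_two_sub_mul_le_neg_one (by omega : 1 ≤ i) hik
    calc _ < _ := abs_theta_mul_aF_zero_lt hq1 hl1 hlk.le hkn hik
      _ ≤ (1 / 2) * (q : ℝ) ^ (-1 : ℤ) * _ * _ := by gcongr; exact hq1.le
      _ = _ := by rw [zpow_neg_one]; ring
end
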